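/- arXiv:1507.04359 — 5 statements merged into one kernel-verified Lean document; each statement's English description precedes it below -/
import Mathlib

section
/- Let Γ be a finite simplicial graph focused at a vertex c, with trivial graph automorphism group and V \ st(c) nonempty. Label by x_1, …, x_l the vertices dominated by but not adjacent to c, by x_{l+1}, …, x_m the vertices dominated by and adjacent to c, and by P_1, …, P_k the connected components of the induced subgraph on V \ st(c), with P_i = {x_i} for 1 ≤ i ≤ l. Then an automorphism of the form τ_{c x_1}^{r_1} ⋯ τ_{c x_m}^{r_m} χ_{c,P_1}^{s_1} ⋯ χ_{c,P_{k−1}}^{s_{k−1}} (with r_i, s_j ∈ ℤ) is an inner automorphism of A_Γ if and only if all exponents r_1, …, r_m, s_1, …, s_{k−1} are zero; consequently the images in Out(A_Γ) of τ_{c x_1}, …, τ_{c x_m}, χ_{c,P_1}, …, χ_{c,P_{k−1}} form a free abelian basis of rank k + m − 1 for the image of PCT in Out(A_Γ). -/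
noncomputable section

/-- The subgroup of inner automorphisms inside `MulAut G`. -/
def Inn (G : Type) [Group G] : Subgroup (MulAut G) :=
  (MulAut.conj : G →* MulAut G).range

instance Inn.normal (G : Type) [Group G] : (Inn G).Normal := by
  constructor
  rintro x ⟨g, rfl⟩ φ
  refine ⟨φ g, ?_⟩
  ext h
  simp [MulAut.mul_apply, MulAut.conj_apply, map_mul, map_inv]

/-- The outer automorphism group of `G`. -/
abbrev Out (G : Type) [Group G] := MulAut G ⧸ Inn G

/-- The set of commutator relators defining the RAAG of a graph. -/
def raagRels {V : Type} (G : SimpleGraph V) : Set (FreeGroup V) :=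
  {r | ∃ u v : V, G.Adj u v ∧
    r = FreeGroup.of u * FreeGroup.of v * (FreeGroup.of u)⁻¹ * (FreeGroup.of v)⁻¹}

/-- The right-angled Artin group of a graph. -/
abbrev RAAG {V : Type} (G : SimpleGraph V) := PresentedGroup (raagRels G)

/-- The standard generator of `RAAG G` corresponding to a vertex. -/
def gen {V : Type} (G : SimpleGraph V) (v : V) : RAAG G := PresentedGroup.of v

/-- The star of a vertex: the vertex together with its neighbours. -/
def star {V : Type} (G : SimpleGraph V) (v : V) : Set V := insert v (G.neighborSet v)

/-- `u` dominates `v` if `lk(v) ⊆ st(u)`. -/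
def Dominates {V : Type} (G : SimpleGraph V) (u v : V) : Prop :=
  G.neighborSet v ⊆ star G u

/-- A graph has trivial automorphism group. -/
def TrivialAut {V : Type} (G : SimpleGraph V) : Prop := ∀ e : G ≃g G, ∀ v, e v = v

/-- A graph is focused at a vertex `c`. -/
def Focused {V : Type} (G : SimpleGraph V) (c : V) : Prop :=
  (∀ u v : V, u ≠ v → Dominates G u v → u = c) ∧
  ∀ v : V, v ≠ c → (G.induce (star G v)ᶜ).Connected

/-- A graph is austere. -/
def Austere {V : Type} (G : SimpleGraph V) : Prop :=
  TrivialAut G ∧ (∀ u v : V, u ≠ v → ¬Dominates G u v) ∧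
  ∀ v : V, (G.induce (star G v)ᶜ).Connected

/-- `P` is (the vertex set of) a connected component of the induced subgraph on `s`. -/
def IsCompOf {V : Type} (G : SimpleGraph V) (s : Set V) (P : Set V) : Prop :=
  ∃ x : s, P = Subtype.val '' {y : s | (G.induce s).Reachable x y}

/-- `φ` is the inversion at the vertex `v`. -/
def IsInversion {V : Type} (G : SimpleGraph V) (φ : MulAut (RAAG G)) (v : V) : Prop :=
  φ (gen G v) = (gen G v)⁻¹ ∧ ∀ w : V, w ≠ v → φ (gen G w) = gen G w

/-- `φ` is the transvection `τ_{uv}` (`v ↦ uv`). -/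
def IsTransvection {V : Type} (G : SimpleGraph V) (φ : MulAut (RAAG G)) (u v : V) : Prop :=
  u ≠ v ∧ Dominates G u v ∧ φ (gen G v) = gen G u * gen G v ∧
    ∀ w : V, w ≠ v → φ (gen G w) = gen G w

/-- `φ` is the partial conjugation `χ_{v,P}`. -/
def IsPartialConj {V : Type} (G : SimpleGraph V) (φ : MulAut (RAAG G)) (v : V) (P : Set V) :
    Prop :=
  IsCompOf G (star G v)ᶜ P ∧ (∀ u ∈ P, φ (gen G u) = gen G v * gen G u * (gen G v)⁻¹) ∧
    ∀ w : V, w ∉ P → φ (gen G w) = gen G w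

/-- The subgroup `I_Γ` of `Aut(A_Γ)` generated by the inversions. -/
def InvSubgroup {V : Type} (G : SimpleGraph V) : Subgroup (MulAut (RAAG G)) :=
  Subgroup.closure {φ | ∃ v, IsInversion G φ v}

/-- The subgroup `PCT` of `Aut(A_Γ)` generated by transvections and partial conjugations. -/
def PCT {V : Type} (G : SimpleGraph V) : Subgroup (MulAut (RAAG G)) :=
  Subgroup.closure {φ | (∃ u v, IsTransvection G φ u v) ∨ ∃ v P, IsPartialConj G φ v P}

/-- The number `l` of vertices dominated by but not adjacent to `c`. -/
def lInv {V : Type} (G : SimpleGraph V) (c : V) : ℕ :=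
  Nat.card {v : V | v ≠ c ∧ Dominates G c v ∧ ¬G.Adj c v}

/-- The number `m` of vertices (other than `c`) dominated by `c`. -/
def mInv {V : Type} (G : SimpleGraph V) (c : V) : ℕ :=
  Nat.card {v : V | v ≠ c ∧ Dominates G c v}

/-- The number `k` of connected components of `Γ \ st(c)`. -/
def kInv {V : Type} (G : SimpleGraph V) (c : V) : ℕ :=
  Nat.card ((G.induce (star G c)ᶜ).ConnectedComponent)

/-- `GL_n(ℤ)`. -/
abbrev GLZ (n : ℕ) := Matrix.GeneralLinearGroup (Fin n) ℤ

/-- `PGL_n(ℤ)`, the quotient of `GL_n(ℤ)` by its centre `{±I}`. -/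
abbrev PGLZ (n : ℕ) := GLZ n ⧸ Subgroup.center (GLZ n)

/-- The principal level 2 congruence subgroup `Λ_l[2]` of `GL_l(ℤ)`. -/
def congr2 (l : ℕ) : Subgroup (GLZ l) :=
  (Matrix.GeneralLinearGroup.map (Int.castRingHom (ZMod 2)) :
    GLZ l →* Matrix.GeneralLinearGroup (Fin l) (ZMod 2)).ker

/-- The matrix `(1 1 / 0 -1)`. -/
def Bmat : Matrix (Fin 2) (Fin 2) ℤ := !![1, 1; 0, -1]

/-- A block-diagonal `2l × 2l` matrix whose `i`th `2 × 2` diagonal block is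
`Bmat` if `ε i` and the identity otherwise. -/
def Lmat (l : ℕ) (ε : Fin l → Bool) : Matrix (Fin l × Fin 2) (Fin l × Fin 2) ℤ :=
  fun a b =>
    if a.1 = b.1 then (if ε a.1 then Bmat a.2 b.2 else (1 : Matrix (Fin 2) (Fin 2) ℤ) a.2 b.2)
    else 0

/-- `GL_{2l}(ℤ)`, with rows and columns indexed by `Fin l × Fin 2`. -/
abbrev GL2l (l : ℕ) := Matrix.GeneralLinearGroup (Fin l × Fin 2) ℤ

/-- The subgroup `𝓛 ≤ GL_{2l}(ℤ)`. -/
def scriptL (l : ℕ) : Subgroup (GL2l l) :=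
  Subgroup.closure {M : GL2l l |
    ∃ ε : Fin l → Bool, (M : Matrix (Fin l × Fin 2) (Fin l × Fin 2) ℤ) = Lmat l ε}

/-- The index type realizing the block decomposition `d = 2l + p + q`. -/
abbrev BIdx (l p q : ℕ) := (Fin l × Fin 2) ⊕ (Fin p ⊕ Fin q)

/-- The block-diagonal matrix `Diag(D₁, D₂, ε·I_q)` with `D₁ ∈ 𝓛` given by `ε1`,
`D₂` diagonal with entries `d2`, and `ε = e`. -/
def Dmat (l p q : ℕ) (ε1 : Fin l → Bool) (d2 : Fin p → ℤˣ) (e : ℤˣ) :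
    Matrix (BIdx l p q) (BIdx l p q) ℤ := fun a b =>
  match a, b with
  | Sum.inl a, Sum.inl b => Lmat l ε1 a b
  | Sum.inr (Sum.inl i), Sum.inr (Sum.inl j) => if i = j then (d2 i : ℤ) else 0
  | Sum.inr (Sum.inr i), Sum.inr (Sum.inr j) => if i = j then (e : ℤ) else 0
  | _, _ => 0

/-- The subgroup `D ≤ GL_d(ℤ)` generated by `−I_d` and the block-diagonal matrices
`Diag(D₁, D₂, ε·I_q)`. -/
def DSub (l p q : ℕ) : Subgroup (Matrix.GeneralLinearGroup (BIdx l p q) ℤ) :=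
  Subgroup.closure
    ({M | (M : Matrix (BIdx l p q) (BIdx l p q) ℤ) = -1} ∪
     {M | ∃ ε1 d2 e, (M : Matrix (BIdx l p q) (BIdx l p q) ℤ) = Dmat l p q ε1 d2 e})

/-- The word `τ_1^{r_1} ⋯ τ_m^{r_m} χ_1^{s_1} ⋯ χ_{k-1}^{s_{k-1}}` in `Aut(A_Γ)`. -/
def word5 {V : Type} (G : SimpleGraph V) {m k : ℕ} (τ : Fin m → MulAut (RAAG G))
    (χ : Fin k → MulAut (RAAG G)) (r : Fin m → ℤ) (s : Fin (k - 1) → ℤ) :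
    MulAut (RAAG G) :=
  (List.ofFn fun i => τ i ^ r i).prod *
    (List.ofFn fun j : Fin (k - 1) => χ (Fin.castLE (Nat.sub_le k 1) j) ^ s j).prod

/-!
Every factor of the word fixes `c` and moves each other generator only by powers of `c`, so
`word5 r s` sends `v` to `c ^ (ρᵥ r + σᵥ s) * v * c ^ (-σᵥ s)`, where `ρᵥ r` collects the
exponents of the transvections at `v` and `σᵥ s` the exponent of the partial conjugation of the
component containing `v`. In particular `(r, s) ↦ word5 r s` is a homomorphism.

If `word5 r s` is conjugation by `g`, comparing exponent sums of `c` at `x i` gives `r i = 0`.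
Then `g` centralises a vertex `b` of the last component and conjugates a vertex `a` of the
`j`-th one to `c ^ s j * a * c ^ (-s j)`; in the infinite dihedral group, with `c` a rotation
and `a`, `b` the same reflection, this forces `s j = 0`.

Modulo `Inn`, focus makes every transvection some `τ i` and every partial conjugation at
`v ≠ c` inner, while the last `χ` is conjugation by `c` times the inverse of the product of the
others, so the words exhaust the image of `PCT`.
-/

section MulAutPowers

variable {H : Type*} [Group H]

theorem MulAut.zpow_apply_eq_self {φ : MulAut H} {a : H} (h : φ a = a) (n : ℤ) :
    (φ ^ n) a = a := by
  have := Equiv.Perm.zpow_apply_eq_self_of_apply_eq_self (f := MulAut.toPerm H φ) h n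
  rw [← map_zpow] at this
  exact this

theorem MulAut.zpow_apply_eq_of_apply_eq {φ : MulAut H} {C a : H} {p q : ℤ} (hC : φ C = C)
    (ha : φ a = C ^ p * a * C ^ q) (n : ℤ) :
    (φ ^ n) a = C ^ (n * p) * a * C ^ (n * q) := by
  have step : ∀ n : ℤ, φ (C ^ (n * p) * a * C ^ (n * q)) =
      C ^ ((n + 1) * p) * a * C ^ ((n + 1) * q) := fun n => by
    rw [map_mul, map_mul, map_zpow, map_zpow, hC, ha, add_mul, add_mul, one_mul, one_mul,
      zpow_add, zpow_add]
    group
  induction n using Int.induction_on with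
  | zero => simp
  | succ n ih => rw [add_comm, zpow_one_add, MulAut.mul_apply, ih, step, add_comm]
  | pred n ih =>
    apply φ.injective
    rw [← MulAut.mul_apply, ← zpow_one_add, step, sub_add_cancel, add_sub_cancel, ih]

theorem MulAut.list_prod_ofFn_apply {n : ℕ} (φ : Fin n → MulAut H) {C a : H} (p q : Fin n → ℤ)
    (hC : ∀ i, φ i C = C) (ha : ∀ i, φ i a = C ^ p i * a * C ^ q i) :
    (List.ofFn φ).prod a = C ^ (∑ i, p i) * a * C ^ (∑ i, q i) := by
  induction n with
  | zero => simp
  | succ n ih =>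
    rw [List.ofFn_succ, List.prod_cons, MulAut.mul_apply,
      ih (fun i => φ i.succ) _ _ (fun i => hC i.succ) (fun i => ha i.succ), map_mul, map_mul,
      map_zpow, map_zpow, hC, ha, Fin.sum_univ_succ, Fin.sum_univ_succ, zpow_add, zpow_add]
    group

end MulAutPowers

@[simp]
theorem mk'_conj_eq_one {H : Type} [Group H] (g : H) :
    QuotientGroup.mk' (Inn H) (MulAut.conj g) = 1 :=
  (QuotientGroup.eq_one_iff _).mpr ⟨g, rfl⟩

section RAAG

variable {V : Type} {G : SimpleGraph V}

theorem mulAut_ext_gen {φ ψ : MulAut (RAAG G)} (h : ∀ v, φ (gen G v) = ψ (gen G v)) : φ = ψ :=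
  MulEquiv.toMonoidHom_injective (PresentedGroup.ext h)

theorem gen_commute {u v : V} (h : G.Adj u v) : Commute (gen G u) (gen G v) := by
  have hrel : PresentedGroup.mk (raagRels G)
      (FreeGroup.of u * FreeGroup.of v * (FreeGroup.of u)⁻¹ * (FreeGroup.of v)⁻¹) = 1 :=
    (QuotientGroup.eq_one_iff _).mpr (Subgroup.subset_normalClosure ⟨u, v, h, rfl⟩)
  simp only [map_mul, map_inv] at hrel
  exact mul_inv_eq_iff_eq_mul.mp (mul_inv_eq_one.mp hrel)

theorem conj_gen_of_mem_star {v w : V} (hw : w ∈ star G v) :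
    MulAut.conj (gen G v) (gen G w) = gen G w := by
  rcases hw with rfl | hvw
  · simp
  · simp [MulAut.conj_apply, (gen_commute hvw).eq]

def raagLift {H : Type*} [Group H] (f : V → H) (hf : ∀ u v, G.Adj u v → Commute (f u) (f v)) :
    RAAG G →* H :=
  PresentedGroup.toGroup (f := f) (by rintro _ ⟨u, v, huv, rfl⟩; simp [(hf u v huv).eq])

@[simp]
theorem raagLift_gen {H : Type*} [Group H] (f : V → H)
    (hf : ∀ u v, G.Adj u v → Commute (f u) (f v)) (v : V) : raagLift f hf (gen G v) = f v :=
  PresentedGroup.toGroup.of _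

theorem add_eq_zero_of_zpow_mul_gen_mul_zpow_eq_conj {c v : V} (hv : v ≠ c) {g : RAAG G}
    {p q : ℤ} (h : gen G c ^ p * gen G v * gen G c ^ q = g * gen G v * g⁻¹) : p + q = 0 := by
  classical
  let expSum : RAAG G →* Multiplicative ℤ :=
    raagLift (fun w => .ofAdd (if w = c then 1 else 0)) fun _ _ _ => Commute.all _ _
  simpa [expSum, hv] using congrArg (fun y => (expSum y).toAdd) h

theorem eq_zero_of_conj_gen_eq_zpow_conj {a b c : V} (ha : a ∉ star G c) (hb : b ∉ star G c)
    {g : RAAG G} {s : ℤ} (hgb : g * gen G b * g⁻¹ = gen G b)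
    (hga : g * gen G a * g⁻¹ = gen G c ^ s * gen G a * gen G c ^ (-s)) : s = 0 := by
  classical
  have hac : a ≠ c := fun h => ha (h ▸ Set.mem_insert a _)
  have hbc : b ≠ c := fun h => hb (h ▸ Set.mem_insert b _)
  let f : V → DihedralGroup 0 := fun w =>
    if w = c then .r 1 else if w = a ∨ w = b then .sr 0 else 1
  have hf_adj : ∀ w, G.Adj c w → f w = 1 := fun w hw => by
    have hwa : w ≠ a := by rintro rfl; exact ha (Or.inr hw)
    have hwb : w ≠ b := by rintro rfl; exact hb (Or.inr hw)
    simp [f, hw.ne', hwa, hwb]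
  have hf_comm : ∀ u v, G.Adj u v → Commute (f u) (f v) := by
    intro u v huv
    by_cases hu : u = c
    · subst hu; rw [hf_adj v huv]; exact .one_right _
    by_cases hv : v = c
    · subst hv; rw [hf_adj u huv.symm]; exact .one_left _
    simp only [f, hu, hv, if_false]
    split_ifs <;> simp
  have hfa : f a = .sr 0 := by simp [f, hac]
  have hfb : f b = .sr 0 := by simp [f, hbc]
  have hb' := congrArg (raagLift f hf_comm) hgb
  have ha' := congrArg (raagLift f hf_comm) hga
  simp only [map_mul, map_inv, map_zpow, raagLift_gen] at ha' hb'
  rw [hfa, ← hfb, hb', hfb] at ha'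
  simp only [f, if_pos, DihedralGroup.r_one_zpow, DihedralGroup.r_mul_sr, DihedralGroup.sr_mul_r,
    DihedralGroup.sr.injEq] at ha'
  have : (0 : ℤ) = 0 - s + -s := ha'
  omega

end RAAG

section Components

variable {V : Type} {G : SimpleGraph V} {s Q Q' : Set V}

theorem IsCompOf.subset (h : IsCompOf G s Q) : Q ⊆ s := by
  obtain ⟨x, rfl⟩ := h
  rintro _ ⟨y, -, rfl⟩
  exact y.2

theorem IsCompOf.nonempty (h : IsCompOf G s Q) : Q.Nonempty := by
  obtain ⟨x, rfl⟩ := h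
  exact ⟨x, x, .refl x, rfl⟩

theorem IsCompOf.eq_of_mem_of_mem (h : IsCompOf G s Q) (h' : IsCompOf G s Q') {w : V}
    (hw : w ∈ Q) (hw' : w ∈ Q') : Q = Q' := by
  obtain ⟨x, rfl⟩ := h
  obtain ⟨x', rfl⟩ := h'
  obtain ⟨y, hxy, rfl⟩ := hw
  obtain ⟨y', hxy', hyy'⟩ := hw'
  obtain rfl : y' = y := Subtype.ext hyy'
  ext
  constructor
  · rintro ⟨z, hz, rfl⟩; exact ⟨z, hxy'.trans (hxy.symm.trans hz), rfl⟩
  · rintro ⟨z, hz, rfl⟩; exact ⟨z, hxy.trans (hxy'.symm.trans hz), rfl⟩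

theorem exists_isCompOf_mem {w : V} (hw : w ∈ s) : ∃ Q, IsCompOf G s Q ∧ w ∈ Q :=
  ⟨_, ⟨⟨w, hw⟩, rfl⟩, ⟨w, hw⟩, .refl _, rfl⟩

theorem IsCompOf.eq_of_connected (h : IsCompOf G s Q) (hs : (G.induce s).Connected) :
    Q = s := by
  refine h.subset.antisymm fun w hw => ?_
  obtain ⟨x, rfl⟩ := h
  exact ⟨⟨w, hw⟩, hs.preconnected x ⟨w, hw⟩, rfl⟩

end Components

section Generators

variable {V : Type} {G : SimpleGraph V} {φ ψ : MulAut (RAAG G)} {u v : V} {P : Set V}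

theorem IsTransvection.unique (hφ : IsTransvection G φ u v) (hψ : IsTransvection G ψ u v) :
    φ = ψ := by
  refine mulAut_ext_gen fun w => ?_
  obtain rfl | hw := eq_or_ne w v
  · rw [hφ.2.2.1, hψ.2.2.1]
  · rw [hφ.2.2.2 w hw, hψ.2.2.2 w hw]

theorem IsPartialConj.unique (hφ : IsPartialConj G φ v P) (hψ : IsPartialConj G ψ v P) :
    φ = ψ := by
  refine mulAut_ext_gen fun w => ?_
  by_cases hw : w ∈ P
  · rw [hφ.2.1 w hw, hψ.2.1 w hw]
  · rw [hφ.2.2 w hw, hψ.2.2 w hw]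

theorem IsPartialConj.apply_gen_self (hφ : IsPartialConj G φ v P) : φ (gen G v) = gen G v :=
  hφ.2.2 v fun hv => hφ.1.subset hv (Set.mem_insert v _)

theorem IsPartialConj.eq_conj_of_connected (hφ : IsPartialConj G φ v P)
    (hconn : (G.induce (star G v)ᶜ).Connected) : φ = MulAut.conj (gen G v) := by
  have hP : P = (star G v)ᶜ := hφ.1.eq_of_connected hconn
  refine mulAut_ext_gen fun w => ?_
  by_cases hw : w ∈ P
  · rw [hφ.2.1 w hw, MulAut.conj_apply]
  · rw [hφ.2.2 w hw, conj_gen_of_mem_star (by simpa [hP] using hw)]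

end Generators

section IndicatorSum

variable {V ι : Type} [Fintype ι] (S : ι → Set V)

open Classical in
def indicatorSum (e : ι → ℤ) (v : V) : ℤ :=
  ∑ i, if v ∈ S i then e i else 0

theorem indicatorSum_add (e e' : ι → ℤ) (v : V) :
    indicatorSum S (e + e') v = indicatorSum S e v + indicatorSum S e' v := by
  simp only [indicatorSum, ← Finset.sum_add_distrib, Pi.add_apply]
  exact Finset.sum_congr rfl fun i _ => by split_ifs <;> simp

@[simp]
theorem indicatorSum_zero (v : V) : indicatorSum S 0 v = 0 := by
  simp [indicatorSum]

theorem indicatorSum_eq_zero {e : ι → ℤ} {v : V} (hv : ∀ i, v ∉ S i) : indicatorSum S e v = 0 := by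
  simp [indicatorSum, hv]

theorem indicatorSum_eq_of_mem {e : ι → ℤ} {v : V} {i : ι} (hS : ∀ j, v ∈ S j → j = i)
    (hv : v ∈ S i) : indicatorSum S e v = e i := by
  rw [indicatorSum, Finset.sum_eq_single i (fun j _ hj => if_neg (mt (hS j) hj)) (by simp),
    if_pos hv]

open Classical in
theorem indicatorSum_single [DecidableEq ι] (i : ι) (a : ℤ) (v : V) :
    indicatorSum S (Pi.single i a) v = if v ∈ S i then a else 0 := by
  rw [indicatorSum, Finset.sum_eq_single i (fun j _ hj => by simp [hj]) (by simp)]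
  simp

end IndicatorSum

section Word

variable {V : Type} {G : SimpleGraph V} {c : V} {m k : ℕ} {x : Fin m → V} {P : Fin k → Set V}
  {τ : Fin m → MulAut (RAAG G)} {χ : Fin k → MulAut (RAAG G)}

theorem list_prod_transvections_apply_gen {n : ℕ} {y : Fin n → V} {ψ : Fin n → MulAut (RAAG G)}
    (hψ : ∀ i, IsTransvection G (ψ i) c (y i)) (r : Fin n → ℤ) (v : V) :
    (List.ofFn fun i => ψ i ^ r i).prod (gen G v) =
      gen G c ^ indicatorSum (fun i => {y i}) r v * gen G v := by
  classical
  have hc : ∀ i, (ψ i ^ r i) (gen G c) = gen G c := fun i =>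
    MulAut.zpow_apply_eq_self ((hψ i).2.2.2 c (hψ i).1) _
  have hv : ∀ i, (ψ i ^ r i) (gen G v) =
      gen G c ^ (if v ∈ ({y i} : Set V) then r i else 0) * gen G v * gen G c ^ (0 : ℤ) := by
    intro i
    by_cases hvi : v ∈ ({y i} : Set V)
    · obtain rfl : v = y i := hvi
      rw [MulAut.zpow_apply_eq_of_apply_eq ((hψ i).2.2.2 c (hψ i).1) (p := 1) (q := 0)
        (by rw [(hψ i).2.2.1]; group)]
      simp
    · rw [MulAut.zpow_apply_eq_self ((hψ i).2.2.2 v hvi)]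
      simp [hvi]
  simpa [indicatorSum] using MulAut.list_prod_ofFn_apply _ _ _ hc hv

theorem list_prod_partialConjs_apply_gen {n : ℕ} {Q : Fin n → Set V}
    {ψ : Fin n → MulAut (RAAG G)} (hψ : ∀ j, IsPartialConj G (ψ j) c (Q j)) (s : Fin n → ℤ)
    (v : V) :
    (List.ofFn fun j => ψ j ^ s j).prod (gen G v) =
      gen G c ^ indicatorSum Q s v * gen G v * gen G c ^ (-indicatorSum Q s v) := by
  classical
  have hc : ∀ j, (ψ j ^ s j) (gen G c) = gen G c := fun j =>
    MulAut.zpow_apply_eq_self (hψ j).apply_gen_self _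
  have hv : ∀ j, (ψ j ^ s j) (gen G v) =
      gen G c ^ (if v ∈ Q j then s j else 0) * gen G v *
        gen G c ^ (if v ∈ Q j then -s j else 0) := by
    intro j
    by_cases hvj : v ∈ Q j
    · rw [MulAut.zpow_apply_eq_of_apply_eq (hψ j).apply_gen_self (p := 1) (q := -1)
        (by rw [(hψ j).2.1 v hvj]; group)]
      simp [hvj]
    · rw [MulAut.zpow_apply_eq_self ((hψ j).2.2 v hvj)]
      simp [hvj]
  rw [MulAut.list_prod_ofFn_apply _ _ _ hc hv, indicatorSum, ← Finset.sum_neg_distrib]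
  simp only [apply_ite Neg.neg, neg_zero]

theorem word5_apply_gen (hτ : ∀ i, IsTransvection G (τ i) c (x i))
    (hχ : ∀ j, IsPartialConj G (χ j) c (P j)) (r : Fin m → ℤ) (s : Fin (k - 1) → ℤ) (v : V) :
    word5 G τ χ r s (gen G v) =
      gen G c ^ (indicatorSum (fun i => {x i}) r v +
          indicatorSum (fun j => P (Fin.castLE (Nat.sub_le k 1) j)) s v) * gen G v *
        gen G c ^ (-indicatorSum (fun j => P (Fin.castLE (Nat.sub_le k 1) j)) s v) := by
  have hc := list_prod_transvections_apply_gen hτ r c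
  rw [indicatorSum_eq_zero _ fun i => (hτ i).1, zpow_zero, one_mul] at hc
  rw [word5, MulAut.mul_apply, list_prod_partialConjs_apply_gen (fun j => hχ _), map_mul, map_mul,
    map_zpow, map_zpow, hc, list_prod_transvections_apply_gen hτ, zpow_add]
  group

theorem word5_apply_gen_self (hτ : ∀ i, IsTransvection G (τ i) c (x i))
    (hχ : ∀ j, IsPartialConj G (χ j) c (P j)) (r : Fin m → ℤ) (s : Fin (k - 1) → ℤ) :
    word5 G τ χ r s (gen G c) = gen G c := by
  have hcP : ∀ j, c ∉ P j := fun j hc => (hχ j).1.subset hc (Set.mem_insert c _)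
  rw [word5_apply_gen hτ hχ, indicatorSum_eq_zero _ fun i => (hτ i).1,
    indicatorSum_eq_zero _ fun j => hcP _]
  group

theorem word5_add (hτ : ∀ i, IsTransvection G (τ i) c (x i))
    (hχ : ∀ j, IsPartialConj G (χ j) c (P j)) (r r' : Fin m → ℤ) (s s' : Fin (k - 1) → ℤ) :
    word5 G τ χ (r + r') (s + s') = word5 G τ χ r s * word5 G τ χ r' s' := by
  refine mulAut_ext_gen fun v => ?_
  rw [MulAut.mul_apply, word5_apply_gen hτ hχ r', map_mul, map_mul, map_zpow, map_zpow,
    word5_apply_gen_self hτ hχ, word5_apply_gen hτ hχ, word5_apply_gen hτ hχ,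
    indicatorSum_add, indicatorSum_add]
  group

@[simp]
theorem word5_zero : word5 G τ χ 0 0 = 1 := by
  simp [word5]

theorem word5_single_left (hτ : ∀ i, IsTransvection G (τ i) c (x i))
    (hχ : ∀ j, IsPartialConj G (χ j) c (P j)) (i : Fin m) :
    word5 G τ χ (Pi.single i 1) 0 = τ i := by
  classical
  refine mulAut_ext_gen fun v => ?_
  rw [word5_apply_gen hτ hχ, indicatorSum_single, indicatorSum_zero]
  by_cases hv : v ∈ ({x i} : Set V)
  · obtain rfl : v = x i := hv
    simp [(hτ i).2.2.1]
  · simp [hv, (hτ i).2.2.2 v hv]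

theorem word5_single_right (hτ : ∀ i, IsTransvection G (τ i) c (x i))
    (hχ : ∀ j, IsPartialConj G (χ j) c (P j)) (j : Fin (k - 1)) :
    word5 G τ χ 0 (Pi.single j 1) = χ (Fin.castLE (Nat.sub_le k 1) j) := by
  classical
  refine mulAut_ext_gen fun v => ?_
  rw [word5_apply_gen hτ hχ, indicatorSum_single, indicatorSum_zero]
  by_cases hv : v ∈ P (Fin.castLE (Nat.sub_le k 1) j)
  · simp [hv, (hχ _).2.1 v hv]
  · simp [hv, (hχ _).2.2 v hv]

theorem eq_of_mem_of_mem_of_isPartialConj (hPinj : Function.Injective P)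
    (hχ : ∀ j, IsPartialConj G (χ j) c (P j)) {w : V} {j j' : Fin k} (hw : w ∈ P j)
    (hw' : w ∈ P j') : j = j' :=
  hPinj ((hχ j).1.eq_of_mem_of_mem (hχ j').1 hw hw')

theorem eq_zero_of_word5_mem_inn (hxinj : Function.Injective x)
    (hτ : ∀ i, IsTransvection G (τ i) c (x i)) (hχ : ∀ j, IsPartialConj G (χ j) c (P j))
    {r : Fin m → ℤ} {s : Fin (k - 1) → ℤ} (h : word5 G τ χ r s ∈ Inn (RAAG G)) : r = 0 := by
  obtain ⟨g, hg⟩ := h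
  funext i
  have hxi := DFunLike.congr_fun hg (gen G (x i))
  rw [MulAut.conj_apply, word5_apply_gen hτ hχ,
    indicatorSum_eq_of_mem (fun i => {x i}) (fun i' hi' => (hxinj hi').symm) rfl] at hxi
  simpa using add_eq_zero_of_zpow_mul_gen_mul_zpow_eq_conj (hτ i).1.symm hxi.symm

theorem eq_zero_of_word5_zero_mem_inn (hPinj : Function.Injective P)
    (hτ : ∀ i, IsTransvection G (τ i) c (x i)) (hχ : ∀ j, IsPartialConj G (χ j) c (P j))
    {s : Fin (k - 1) → ℤ} (h : word5 G τ χ 0 s ∈ Inn (RAAG G)) : s = 0 := by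
  obtain ⟨g, hg⟩ := h
  funext j
  have hk : k - 1 < k := by have := j.isLt; omega
  obtain ⟨a, ha⟩ := (hχ (Fin.castLE (Nat.sub_le k 1) j)).1.nonempty
  obtain ⟨b, hb⟩ := (hχ ⟨k - 1, hk⟩).1.nonempty
  have hσb : indicatorSum (fun j => P (Fin.castLE (Nat.sub_le k 1) j)) s b = 0 :=
    indicatorSum_eq_zero _ fun j' hj' => by
      have := congrArg Fin.val (eq_of_mem_of_mem_of_isPartialConj hPinj hχ hj' hb)
      simp at this
      omega
  have hσa : indicatorSum (fun j => P (Fin.castLE (Nat.sub_le k 1) j)) s a = s j :=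
    indicatorSum_eq_of_mem _ (fun j' hj' =>
      Fin.castLE_injective _ (eq_of_mem_of_mem_of_isPartialConj hPinj hχ hj' ha)) ha
  have hgb := DFunLike.congr_fun hg (gen G b)
  have hga := DFunLike.congr_fun hg (gen G a)
  rw [MulAut.conj_apply, word5_apply_gen hτ hχ, hσb] at hgb
  rw [MulAut.conj_apply, word5_apply_gen hτ hχ, hσa] at hga
  simp only [indicatorSum_zero, zero_add, zpow_zero, neg_zero, one_mul, mul_one] at hgb hga
  exact eq_zero_of_conj_gen_eq_zpow_conj ((hχ _).1.subset ha) ((hχ _).1.subset hb) hgb hga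

theorem word5_mem_inn_iff (hxinj : Function.Injective x) (hPinj : Function.Injective P)
    (hτ : ∀ i, IsTransvection G (τ i) c (x i)) (hχ : ∀ j, IsPartialConj G (χ j) c (P j))
    (r : Fin m → ℤ) (s : Fin (k - 1) → ℤ) :
    word5 G τ χ r s ∈ Inn (RAAG G) ↔ r = 0 ∧ s = 0 := by
  constructor
  · intro h
    obtain rfl := eq_zero_of_word5_mem_inn hxinj hτ hχ h
    exact ⟨rfl, eq_zero_of_word5_zero_mem_inn hPinj hτ hχ h⟩
  · rintro ⟨rfl, rfl⟩
    simp

theorem word5_one_mul_eq_conj (hPinj : Function.Injective P)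
    (hP : ∀ Q : Set V, IsCompOf G (star G c)ᶜ Q ↔ ∃ j, P j = Q)
    (hτ : ∀ i, IsTransvection G (τ i) c (x i)) (hχ : ∀ j, IsPartialConj G (χ j) c (P j))
    {j : Fin k} (hj : (j : ℕ) = k - 1) :
    word5 G τ χ 0 1 * χ j = MulAut.conj (gen G c) := by
  have hne : ∀ (j' : Fin (k - 1)), Fin.castLE (Nat.sub_le k 1) j' ≠ j := fun j' h => by
    have := congrArg Fin.val h
    simp only [Fin.val_castLE] at this
    omega
  refine mulAut_ext_gen fun w => ?_
  rw [MulAut.mul_apply]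
  by_cases hw : w ∈ P j
  · rw [(hχ j).2.1 w hw, map_mul, map_mul, map_inv, word5_apply_gen_self hτ hχ,
      word5_apply_gen hτ hχ, indicatorSum_eq_zero _ fun j' hj' =>
        hne j' (eq_of_mem_of_mem_of_isPartialConj hPinj hχ hj' hw)]
    simp [MulAut.conj_apply]
  rw [(hχ j).2.2 w hw, word5_apply_gen hτ hχ, indicatorSum_zero, zero_add]
  by_cases hs : w ∈ star G c
  · rw [indicatorSum_eq_zero _ fun j' hj' => (hχ _).1.subset hj' hs, conj_gen_of_mem_star hs]
    simp
  obtain ⟨Q, hQ, hwQ⟩ := exists_isCompOf_mem (G := G) (s := (star G c)ᶜ) hs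
  obtain ⟨j', rfl⟩ := (hP Q).1 hQ
  have hj' : (j' : ℕ) < k - 1 := by
    have := Fin.val_ne_of_ne fun h : j' = j => hw (h ▸ hwQ)
    omega
  rw [indicatorSum_eq_of_mem (fun j => P (Fin.castLE (Nat.sub_le k 1) j)) (i := ⟨j', hj'⟩)
    (fun j'' hj'' => Fin.ext (by
      simpa using congrArg Fin.val (eq_of_mem_of_mem_of_isPartialConj hPinj hχ hj'' hwQ))) hwQ]
  simp [MulAut.conj_apply]

theorem word5_mem_PCT (hτ : ∀ i, IsTransvection G (τ i) c (x i))
    (hχ : ∀ j, IsPartialConj G (χ j) c (P j)) (r : Fin m → ℤ) (s : Fin (k - 1) → ℤ) :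
    word5 G τ χ r s ∈ PCT G := by
  refine Subgroup.mul_mem _ (Subgroup.list_prod_mem _ ?_) (Subgroup.list_prod_mem _ ?_)
  · exact List.forall_mem_ofFn_iff.mpr fun i =>
      Subgroup.zpow_mem _ (Subgroup.subset_closure (.inl ⟨c, x i, hτ i⟩)) _
  · exact List.forall_mem_ofFn_iff.mpr fun j =>
      Subgroup.zpow_mem _ (Subgroup.subset_closure (.inr ⟨c, _, hχ _⟩)) _

def outWord5Hom (hτ : ∀ i, IsTransvection G (τ i) c (x i))
    (hχ : ∀ j, IsPartialConj G (χ j) c (P j)) :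
    Multiplicative ((Fin m → ℤ) × (Fin (k - 1) → ℤ)) →* Out (RAAG G) :=
  MonoidHom.mk' (fun rs => QuotientGroup.mk' _ (word5 G τ χ rs.toAdd.1 rs.toAdd.2)) fun _ _ => by
    rw [← map_mul, ← word5_add hτ hχ]
    rfl

theorem mk'_word5_injective (hxinj : Function.Injective x) (hPinj : Function.Injective P)
    (hτ : ∀ i, IsTransvection G (τ i) c (x i)) (hχ : ∀ j, IsPartialConj G (χ j) c (P j)) :
    Function.Injective fun rs : (Fin m → ℤ) × (Fin (k - 1) → ℤ) =>
      QuotientGroup.mk' (Inn (RAAG G)) (word5 G τ χ rs.1 rs.2) := by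
  refine ((injective_iff_map_eq_one (outWord5Hom hτ hχ)).mpr fun rs h => ?_).comp
    Multiplicative.ofAdd.injective
  obtain ⟨h1, h2⟩ :=
    (word5_mem_inn_iff hxinj hPinj hτ hχ _ _).mp ((QuotientGroup.eq_one_iff _).mp h)
  exact congrArg Multiplicative.ofAdd (Prod.ext h1 h2)

theorem exists_mk'_word5_eq_mk' (hF : Focused G c)
    (hx : ∀ v : V, (v ≠ c ∧ Dominates G c v) ↔ ∃ i, x i = v) (hPinj : Function.Injective P)
    (hP : ∀ Q : Set V, IsCompOf G (star G c)ᶜ Q ↔ ∃ j, P j = Q)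
    (hτ : ∀ i, IsTransvection G (τ i) c (x i)) (hχ : ∀ j, IsPartialConj G (χ j) c (P j))
    {φ : MulAut (RAAG G)}
    (hφ : (∃ u v, IsTransvection G φ u v) ∨ ∃ v Q, IsPartialConj G φ v Q) :
    ∃ r s, QuotientGroup.mk' (Inn (RAAG G)) (word5 G τ χ r s) = QuotientGroup.mk' _ φ := by
  rcases hφ with ⟨u, v, hφ⟩ | ⟨v, Q, hφ⟩
  · obtain rfl := hF.1 u v hφ.1 hφ.2.1
    obtain ⟨i, rfl⟩ := (hx v).1 ⟨hφ.1.symm, hφ.2.1⟩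
    exact ⟨Pi.single i 1, 0, by rw [word5_single_left hτ hχ, hφ.unique (hτ i)]⟩
  obtain rfl | hvc := eq_or_ne v c
  · obtain ⟨j, rfl⟩ := (hP Q).1 hφ.1
    rw [hφ.unique (hχ j)]
    by_cases hj : (j : ℕ) < k - 1
    · exact ⟨0, Pi.single ⟨j, hj⟩ 1, by rw [word5_single_right hτ hχ]; rfl⟩
    refine ⟨0, -1, ?_⟩
    have hconj : χ j = (word5 G τ χ 0 1)⁻¹ * MulAut.conj (gen G v) :=
      eq_inv_mul_of_mul_eq (word5_one_mul_eq_conj hPinj hP hτ hχ (by omega))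
    have hneg : word5 G τ χ 0 (-1) = (word5 G τ χ 0 1)⁻¹ :=
      eq_inv_of_mul_eq_one_left (by rw [← word5_add hτ hχ]; simp)
    rw [hconj, hneg, map_mul, mk'_conj_eq_one, mul_one]
  · refine ⟨0, 0, ?_⟩
    rw [word5_zero, hφ.eq_conj_of_connected (hF.2 v hvc), map_one, mk'_conj_eq_one]

theorem range_mk'_word5 (hF : Focused G c)
    (hx : ∀ v : V, (v ≠ c ∧ Dominates G c v) ↔ ∃ i, x i = v) (hPinj : Function.Injective P)
    (hP : ∀ Q : Set V, IsCompOf G (star G c)ᶜ Q ↔ ∃ j, P j = Q)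
    (hτ : ∀ i, IsTransvection G (τ i) c (x i)) (hχ : ∀ j, IsPartialConj G (χ j) c (P j)) :
    Set.range (fun rs : (Fin m → ℤ) × (Fin (k - 1) → ℤ) =>
        QuotientGroup.mk' (Inn (RAAG G)) (word5 G τ χ rs.1 rs.2)) =
      ↑(Subgroup.map (QuotientGroup.mk' (Inn (RAAG G))) (PCT G)) := by
  refine (Multiplicative.ofAdd.surjective.range_comp (outWord5Hom hτ hχ)).trans
    ((MonoidHom.coe_range _).symm.trans (congrArg SetLike.coe (le_antisymm ?_ ?_)))
  · rintro _ ⟨rs, rfl⟩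
    exact ⟨_, word5_mem_PCT hτ hχ _ _, rfl⟩
  · rw [PCT, MonoidHom.map_closure, Subgroup.closure_le]
    rintro _ ⟨φ, hφ, rfl⟩
    obtain ⟨r, s, h⟩ := exists_mk'_word5_eq_mk' hF hx hPinj hP hτ hχ hφ
    exact ⟨.ofAdd (r, s), h⟩

end Word

theorem stmt5_general {V : Type} (G : SimpleGraph V) (c : V) (hF : Focused G c) (m k : ℕ)
    (x : Fin m → V) (hxinj : Function.Injective x)
    (hx : ∀ v : V, (v ≠ c ∧ Dominates G c v) ↔ ∃ i, x i = v)
    (P : Fin k → Set V) (hPinj : Function.Injective P)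
    (hP : ∀ Q : Set V, IsCompOf G (star G c)ᶜ Q ↔ ∃ j, P j = Q)
    (τ : Fin m → MulAut (RAAG G)) (hτ : ∀ i, IsTransvection G (τ i) c (x i))
    (χ : Fin k → MulAut (RAAG G)) (hχ : ∀ j, IsPartialConj G (χ j) c (P j)) :
    (∀ (r : Fin m → ℤ) (s : Fin (k - 1) → ℤ),
        word5 G τ χ r s ∈ Inn (RAAG G) ↔ r = 0 ∧ s = 0) ∧
    Function.Injective (fun rs : (Fin m → ℤ) × (Fin (k - 1) → ℤ) =>
      QuotientGroup.mk' (Inn (RAAG G)) (word5 G τ χ rs.1 rs.2)) ∧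
    (∀ (r r' : Fin m → ℤ) (s s' : Fin (k - 1) → ℤ),
      QuotientGroup.mk' (Inn (RAAG G)) (word5 G τ χ (r + r') (s + s')) =
        QuotientGroup.mk' (Inn (RAAG G)) (word5 G τ χ r s) *
          QuotientGroup.mk' (Inn (RAAG G)) (word5 G τ χ r' s')) ∧
    Set.range (fun rs : (Fin m → ℤ) × (Fin (k - 1) → ℤ) =>
        QuotientGroup.mk' (Inn (RAAG G)) (word5 G τ χ rs.1 rs.2)) =
      ↑(Subgroup.map (QuotientGroup.mk' (Inn (RAAG G))) (PCT G)) :=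
  ⟨word5_mem_inn_iff hxinj hPinj hτ hχ, mk'_word5_injective hxinj hPinj hτ hχ,
    fun r r' s s' => by rw [word5_add hτ hχ, map_mul], range_mk'_word5 hF hx hPinj hP hτ hχ⟩

/-- A word `τ_1^{r_1} ⋯ τ_m^{r_m} χ_1^{s_1} ⋯ χ_{k-1}^{s_{k-1}}` is inner iff all the
exponents vanish; consequently the images of the `τ_i` and `χ_j` (`1 ≤ j ≤ k-1`) form a
free abelian basis of rank `k + m - 1` for the image of `PCT` in `Out(A_Γ)`. -/
theorem stmt5 {V : Type} [Fintype V] (G : SimpleGraph V) (c : V)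
    (hF : Focused G c) (hT : TrivialAut G)
    (hne : ((star G c)ᶜ : Set V).Nonempty)
    (l m k : ℕ) (hlm : l ≤ m) (hlk : l ≤ k)
    (x : Fin m → V) (hxinj : Function.Injective x)
    (hx : ∀ v : V, (v ≠ c ∧ Dominates G c v) ↔ ∃ i, x i = v)
    (hxl : ∀ i : Fin m, (i : ℕ) < l ↔ ¬G.Adj c (x i))
    (P : Fin k → Set V) (hPinj : Function.Injective P)
    (hP : ∀ Q : Set V, IsCompOf G (star G c)ᶜ Q ↔ ∃ j, P j = Q)
    (hPl : ∀ (j : Fin k) (hj : (j : ℕ) < l), P j = {x ⟨j, lt_of_lt_of_le hj hlm⟩})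
    (τ : Fin m → MulAut (RAAG G)) (hτ : ∀ i, IsTransvection G (τ i) c (x i))
    (χ : Fin k → MulAut (RAAG G)) (hχ : ∀ j, IsPartialConj G (χ j) c (P j)) :
    (∀ (r : Fin m → ℤ) (s : Fin (k - 1) → ℤ),
        word5 G τ χ r s ∈ Inn (RAAG G) ↔ r = 0 ∧ s = 0) ∧
    Function.Injective (fun rs : (Fin m → ℤ) × (Fin (k - 1) → ℤ) =>
      QuotientGroup.mk' (Inn (RAAG G)) (word5 G τ χ rs.1 rs.2)) ∧
    (∀ (r r' : Fin m → ℤ) (s s' : Fin (k - 1) → ℤ),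
      QuotientGroup.mk' (Inn (RAAG G)) (word5 G τ χ (r + r') (s + s')) =
        QuotientGroup.mk' (Inn (RAAG G)) (word5 G τ χ r s) *
          QuotientGroup.mk' (Inn (RAAG G)) (word5 G τ χ r' s')) ∧
    Set.range (fun rs : (Fin m → ℤ) × (Fin (k - 1) → ℤ) =>
        QuotientGroup.mk' (Inn (RAAG G)) (word5 G τ χ rs.1 rs.2)) =
      ↑(Subgroup.map (QuotientGroup.mk' (Inn (RAAG G))) (PCT G)) :=
  stmt5_general G c hF m k x hxinj hx P hPinj hP τ hτ χ hχ
end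
end

section
/- Let l ≥ 1, p ≥ 0, q ≥ 0 be integers and set d = 2l + p + q. Let D be the subgroup of GL_d(ℤ) generated by −I_d together with all block-diagonal matrices Diag(D₁, D₂, ε·I_q), where D₁ ∈ 𝓛 ≤ GL_{2l}(ℤ), D₂ is any diagonal matrix in GL_p(ℤ) (i.e. diagonal with entries ±1), and ε ∈ {±1}. Then the centralizer of D in GL_d(ℤ) is isomorphic as a group to Λ_l[2] × (ℤ/2ℤ)^{l+p} × GL_q(ℤ). -/
noncomputable section

/-!
A matrix commuting with the diagonal generators (`ε1 = false`) preserves their common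
eigenspaces, so it is block diagonal: a block on the `2l` coordinates, a scalar on each of the
`p` coordinates and a `q × q` block `C`. Ordering the `2l` coordinates as `(e_{i,0})_i`,
`(e_{i,1})_i`, commuting with the generators of `𝓛` forces the first block into the form
`[[A, T], [0, S]]` with `S` diagonal and `2T = A - S`. Over `ℚ` this matrix is `R diag(A, S) R⁻¹`
with `R = [[1, -1/2], [0, 1]]` (the same `R` conjugates `diag(1, -1)` to `(1 1 / 0 -1)`), so the
parametrization by `(A, S, C)` is multiplicative; over `ℤ` this is the identity
`2(AT' + TS') = AA' - SS'`. For an invertible centralizer element the entries of `S` and the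
scalars on the `p` coordinates are units `±1`, and `T` is integral exactly when
`A ≡ S ≡ 1 (mod 2)`, i.e. `A ∈ Λ_l[2]`.
-/

open Matrix

theorem Matrix.apply_eq_zero_of_commute_diagonal {n R : Type*} [Fintype n] [DecidableEq n]
    [CommRing R] [NoZeroDivisors R] {d : n → R} {M : Matrix n n R}
    (h : Commute (diagonal d) M) {a b : n} (hab : d a ≠ d b) : M a b = 0 := by
  have key := congrFun₂ h.eq a b
  rw [diagonal_mul, mul_diagonal, mul_comm, ← sub_eq_zero, ← mul_sub] at key
  exact (mul_eq_zero.mp key).resolve_right (sub_ne_zero.mpr hab)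

def blockRingEquiv (ι R : Type*) [Fintype ι] [Semiring R] :
    Matrix (Fin 2) (Fin 2) (Matrix ι ι R) ≃+* Matrix (ι × Fin 2) (ι × Fin 2) R :=
  (compRingEquiv (Fin 2) ι R).trans (reindexRingEquiv R (Equiv.prodComm (Fin 2) ι))

section UpperBlocks

variable {ι R : Type*} [Fintype ι]

def upperBlocks [Semiring R] (A T S : Matrix ι ι R) : Matrix (ι × Fin 2) (ι × Fin 2) R :=
  blockRingEquiv ι R !![A, T; 0, S]

@[simp]
theorem upperBlocks_apply [Semiring R] (A T S : Matrix ι ι R) (i j : ι) (a b : Fin 2) :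
    upperBlocks A T S (i, a) (j, b) = !![A, T; 0, S] a b i j := rfl

theorem upperBlocks_mul [Semiring R] (A T S A' T' S' : Matrix ι ι R) :
    upperBlocks A T S * upperBlocks A' T' S' =
      upperBlocks (A * A') (A * T' + T * S') (S * S') := by
  simp only [upperBlocks, ← map_mul, mul_fin_two, mul_zero, zero_mul, add_zero, zero_add]

theorem upperBlocks_injective [Semiring R] {A T S A' T' S' : Matrix ι ι R}
    (h : upperBlocks A T S = upperBlocks A' T' S') : A = A' ∧ T = T' ∧ S = S' := by
  have h' := (blockRingEquiv ι R).injective h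
  exact ⟨by simpa using congrFun₂ h' 0 0, by simpa using congrFun₂ h' 0 1,
    by simpa using congrFun₂ h' 1 1⟩

theorem upperBlocks_one [Semiring R] [DecidableEq ι] :
    upperBlocks (1 : Matrix ι ι R) 0 1 = 1 := by
  rw [upperBlocks, ← one_fin_two, map_one]

theorem two_smul_mul_add_mul {A T S A' T' S' : Matrix ι ι ℤ} (hT : (2 : ℤ) • T = A - S)
    (hT' : (2 : ℤ) • T' = A' - S') : (2 : ℤ) • (A * T' + T * S') = A * A' - S * S' := by
  rw [smul_add, ← mul_smul_comm, ← smul_mul_assoc, hT, hT', mul_sub, sub_mul]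
  abel

theorem exists_upperBlocks_of_forall_commute [DecidableEq ι]
    {X : Matrix (ι × Fin 2) (ι × Fin 2) ℤ}
    (hX : ∀ i, Commute (upperBlocks 1 (diagonal fun k => if k = i then 1 else 0)
      (diagonal fun k => if k = i then -1 else 1)) X) :
    ∃ A T s, (2 : ℤ) • T = A - diagonal s ∧ X = upperBlocks A T (diagonal s) := by
  obtain ⟨N, rfl⟩ := (blockRingEquiv ι ℤ).surjective X
  obtain ⟨A, T, Z, S, rfl⟩ : ∃ A T Z S, N = !![A, T; Z, S] := ⟨_, _, _, _, eta_fin_two N⟩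
  have key : ∀ i, (diagonal fun k => if k = i then 1 else 0) * Z = 0 ∧
      T + (diagonal fun k => if k = i then 1 else 0) * S =
        A * (diagonal fun k => if k = i then 1 else 0) +
          T * (diagonal fun k => if k = i then -1 else 1) ∧
      (diagonal fun k => if k = i then -1 else 1) * Z = Z ∧
      (diagonal fun k => if k = i then -1 else 1) * S =
        Z * (diagonal fun k => if k = i then 1 else 0) +
          S * (diagonal fun k => if k = i then -1 else 1) := fun i => by
    have h := (hX i).eq
    rw [upperBlocks, ← map_mul (blockRingEquiv ι ℤ), ← map_mul (blockRingEquiv ι ℤ)] at h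
    simpa [and_assoc] using (blockRingEquiv ι ℤ).injective h
  have hZ : Z = 0 := by
    ext i c
    simpa [diagonal_mul] using congrFun₂ (key i).1 i c
  have hS : S = diagonal fun k => S k k := by
    ext a b
    by_cases hab : a = b
    · simp [hab]
    rw [diagonal_apply_ne _ hab]
    refine apply_eq_zero_of_commute_diagonal (d := fun k => if k = a then -1 else 1) ?_ ?_
    · have h := (key a).2.2.2
      rwa [hZ, zero_mul, zero_add] at h
    · simp [Ne.symm hab]
  refine ⟨A, T, fun k => S k k, ?_, ?_⟩
  · ext a b
    have h := congrFun₂ (key b).2.1 a b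
    by_cases hab : a = b
    · subst hab
      simp only [Matrix.add_apply, diagonal_mul, mul_diagonal, ↓reduceIte, one_mul, mul_one,
        mul_neg, Matrix.smul_apply, smul_eq_mul, Matrix.sub_apply, diagonal_apply_eq] at h ⊢
      omega
    · simp only [Matrix.add_apply, diagonal_mul, mul_diagonal, hab, ↓reduceIte, zero_mul,
        add_zero, mul_one, mul_neg, Matrix.smul_apply, smul_eq_mul, Matrix.sub_apply,
        ne_eq, not_false_eq_true, diagonal_apply_ne, sub_zero] at h ⊢
      omega
  · rw [hZ, ← hS]
    rfl

end UpperBlocks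

section BlockForm

variable {ι κ ν R : Type*} [Fintype ι] [DecidableEq ι] [DecidableEq κ]

def blockForm [Semiring R] (A T : Matrix ι ι R) (s : ι → R) (t : κ → R) (C : Matrix ν ν R) :
    Matrix (ι × Fin 2 ⊕ κ ⊕ ν) (ι × Fin 2 ⊕ κ ⊕ ν) R :=
  fromBlocks (upperBlocks A T (diagonal s)) 0 0 (fromBlocks (diagonal t) 0 0 C)

theorem blockForm_mul [Semiring R] [Fintype κ] [Fintype ν] (A T A' T' : Matrix ι ι R)
    (s s' : ι → R) (t t' : κ → R) (C C' : Matrix ν ν R) :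
    blockForm A T s t C * blockForm A' T' s' t' C' =
      blockForm (A * A') (A * T' + T * diagonal s') (s * s') (t * t') (C * C') := by
  simp only [blockForm, fromBlocks_multiply, upperBlocks_mul, diagonal_mul_diagonal,
    Matrix.mul_zero, Matrix.zero_mul, add_zero, zero_add]
  rfl

theorem blockForm_one [Semiring R] [DecidableEq ν] :
    blockForm (1 : Matrix ι ι R) 0 1 (1 : κ → R) (1 : Matrix ν ν R) = 1 := by
  simp [blockForm, upperBlocks_one]

theorem blockForm_injective [Semiring R] {A T A' T' : Matrix ι ι R} {s s' : ι → R}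
    {t t' : κ → R} {C C' : Matrix ν ν R} (h : blockForm A T s t C = blockForm A' T' s' t' C') :
    A = A' ∧ T = T' ∧ s = s' ∧ t = t' ∧ C = C' := by
  obtain ⟨hU, -, -, hV⟩ := fromBlocks_inj.mp h
  obtain ⟨ht, -, -, hC⟩ := fromBlocks_inj.mp hV
  obtain ⟨hA, hT, hs⟩ := upperBlocks_injective hU
  exact ⟨hA, hT, diagonal_injective hs, diagonal_injective ht, hC⟩

theorem blockForm_commute [Fintype κ] [Fintype ν] {A T A' T' : Matrix ι ι ℤ} {s s' : ι → ℤ}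
    {t t' : κ → ℤ} {C C' : Matrix ν ν ℤ} (hT : (2 : ℤ) • T = A - diagonal s)
    (hT' : (2 : ℤ) • T' = A' - diagonal s') (hA : Commute A A') (hC : Commute C C') :
    Commute (blockForm A T s t C) (blockForm A' T' s' t' C') := by
  have hmid : A * T' + T * diagonal s' = A' * T + T' * diagonal s :=
    smul_right_injective _ (two_ne_zero : (2 : ℤ) ≠ 0) <| by
      dsimp only
      rw [two_smul_mul_add_mul hT hT', two_smul_mul_add_mul hT' hT, hA.eq,
        diagonal_mul_diagonal, diagonal_mul_diagonal]
      simp only [mul_comm (s _)]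
  rw [Commute, SemiconjBy, blockForm_mul, blockForm_mul, hA.eq, hC.eq, hmid, mul_comm s,
    mul_comm t]

end BlockForm

def halfMatrix {m n : Type*} (M : Matrix m n ℤ) : Matrix m n ℤ := fun i j => M i j / 2

theorem halfMatrix_two_smul {m n : Type*} (T : Matrix m n ℤ) :
    halfMatrix ((2 : ℤ) • T) = T := by
  ext i j
  simp [halfMatrix]

theorem two_smul_halfMatrix {m n : Type*} {M : Matrix m n ℤ} (h : ∀ i j, 2 ∣ M i j) :
    (2 : ℤ) • halfMatrix M = M := by
  ext i j
  exact Int.mul_ediv_cancel' (h i j)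

theorem Int.cast_units_zmod_two (u : ℤˣ) : ((u : ℤ) : ZMod 2) = 1 := by
  rcases Int.units_eq_one_or u with rfl | rfl <;> rfl

def negOnePowHom : Multiplicative (ZMod 2) →* ℤˣ where
  toFun z := (-1 : ℤˣ) ^ z.toAdd
  map_one' := uzpow_zero _
  map_mul' a b := uzpow_add _ a.toAdd b.toAdd

def unitsIntMulEquiv : ℤˣ ≃* Multiplicative (ZMod 2) :=
  (MulEquiv.ofBijective negOnePowHom (by decide)).symm

def unitsIntPiMulEquiv (n : ℕ) : (Fin n → ℤˣ) ≃* Multiplicative (Fin n → ZMod 2) :=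
  (MulEquiv.piCongrRight fun _ => unitsIntMulEquiv).trans (MulEquiv.piMultiplicative _).symm

variable {l p q : ℕ}

theorem mem_congr2_iff_two_dvd (g : GLZ l) (σ : Fin l → ℤˣ) :
    g ∈ congr2 l ↔
      ∀ i j, 2 ∣ ((g : Matrix (Fin l) (Fin l) ℤ) - diagonal fun k => (σ k : ℤ)) i j := by
  have hσ : ∀ i j, (((diagonal fun k => (σ k : ℤ)) i j : ℤ) : ZMod 2) =
      (1 : Matrix (Fin l) (Fin l) (ZMod 2)) i j := by
    intro i j
    by_cases h : i = j <;> simp [h, one_apply, Int.cast_units_zmod_two]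
  simp only [congr2, MonoidHom.mem_ker, Units.ext_iff, ← Matrix.ext_iff,
    GeneralLinearGroup.map_apply, Int.coe_castRingHom, Units.val_one, ← hσ]
  refine forall₂_congr fun i j => ?_
  rw [Matrix.sub_apply, ← sub_eq_zero, ← Int.cast_sub, ZMod.intCast_zmod_eq_zero_iff_dvd,
    Nat.cast_ofNat]

theorem Dmat_eq_blockForm (ε1 : Fin l → Bool) (d2 : Fin p → ℤˣ) (e : ℤˣ) :
    Dmat l p q ε1 d2 e = blockForm 1 (diagonal fun i => if ε1 i then 1 else 0)
      (fun i => if ε1 i then -1 else 1) (fun j => (d2 j : ℤ)) (diagonal fun _ => (e : ℤ)) := by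
  ext (⟨i, a⟩ | j | k) (⟨i', b⟩ | j' | k')
  · simp only [Dmat, Lmat, blockForm, fromBlocks_apply₁₁, upperBlocks_apply]
    by_cases h : i = i'
    · subst h
      cases hε : ε1 i <;> fin_cases a <;> fin_cases b <;> simp [Bmat, hε]
    · fin_cases a <;> fin_cases b <;> simp [h]
  all_goals simp [Dmat, blockForm, diagonal_apply]

theorem two_smul_diagonal_eq_one_sub (ε : Fin l → Bool) :
    (2 : ℤ) • (diagonal fun i => if ε i then 1 else 0) =
      1 - diagonal fun i => if ε i then -1 else 1 := by
  ext i j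
  by_cases h : i = j
  · subst h
    cases hε : ε i <;> simp [hε]
  · simp [h]

theorem Dmat_mul_self (ε1 : Fin l → Bool) (d2 : Fin p → ℤˣ) (e : ℤˣ) :
    Dmat l p q ε1 d2 e * Dmat l p q ε1 d2 e = 1 := by
  rw [Dmat_eq_blockForm, blockForm_mul, ← blockForm_one]
  congr 1
  · exact mul_one 1
  · ext i j
    by_cases h : i = j
    · subst h
      cases hε : ε1 i <;> simp [hε]
    · simp [h]
  · ext i
    cases hε : ε1 i <;> simp [hε]
  · ext j
    simp
  · simp [diagonal_mul_diagonal]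

theorem Dmat_eq_diagonal (d2 : Fin p → ℤˣ) (e : ℤˣ) :
    Dmat l p q (fun _ => false) d2 e =
      diagonal (Sum.elim (fun _ => 1) (Sum.elim (fun j => (d2 j : ℤ)) fun _ => (e : ℤ))) := by
  ext (⟨i, a⟩ | j | k) (⟨i', b⟩ | j' | k')
  all_goals simp [Dmat, Lmat, one_apply, diagonal_apply, ite_and]

theorem eq_fromBlocks_of_forall_commute_Dmat {M : Matrix (BIdx l p q) (BIdx l p q) ℤ}
    (hM : ∀ ε1 d2 e, Commute (Dmat l p q ε1 d2 e) M) :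
    M = fromBlocks M.toBlocks₁₁ 0 0
      (fromBlocks (diagonal fun j => M (.inr (.inl j)) (.inr (.inl j))) 0 0
        M.toBlocks₂₂.toBlocks₂₂) := by
  have hzero : ∀ (d2 : Fin p → ℤˣ) (e : ℤˣ) {a b : BIdx l p q},
      Sum.elim (fun _ => 1) (Sum.elim (fun j => (d2 j : ℤ)) fun _ => (e : ℤ)) a ≠
        Sum.elim (fun _ => 1) (Sum.elim (fun j => (d2 j : ℤ)) fun _ => (e : ℤ)) b → M a b = 0 :=
    fun d2 e _ _ h => apply_eq_zero_of_commute_diagonal (Dmat_eq_diagonal d2 e ▸ hM _ d2 e) h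
  -- `d2 = Pi.mulSingle j (-1)` isolates the `j`-th `p` coordinate, `e = -1` the `q` block.
  ext (x | j | k) (y | j' | k')
  · rfl
  · exact hzero (Pi.mulSingle j' (-1)) 1 (by simp)
  · exact hzero 1 (-1) (by simp)
  · exact hzero (Pi.mulSingle j (-1)) 1 (by simp)
  · by_cases h : j = j'
    · simp [h]
    · simpa [h] using hzero (Pi.mulSingle j (-1)) 1 (by simp [h])
  · exact hzero 1 (-1) (by simp)
  · exact hzero 1 (-1) (by simp)
  · exact hzero 1 (-1) (by simp)
  · rfl

theorem exists_blockForm_of_forall_commute_Dmat {M : Matrix (BIdx l p q) (BIdx l p q) ℤ}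
    (hM : ∀ ε1 d2 e, Commute (Dmat l p q ε1 d2 e) M) :
    ∃ A T s t C, (2 : ℤ) • T = A - diagonal s ∧ M = blockForm A T s t C := by
  have hblocks := eq_fromBlocks_of_forall_commute_Dmat hM
  obtain ⟨A, T, s, hT, hX⟩ := exists_upperBlocks_of_forall_commute (X := M.toBlocks₁₁) fun i => by
    have h := (hM (fun k => decide (k = i)) 1 1).eq
    rw [Dmat_eq_blockForm, blockForm, hblocks] at h
    simp only [fromBlocks_multiply, Matrix.zero_mul, Matrix.mul_zero, add_zero, zero_add,
      decide_eq_true_eq] at h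
    exact (fromBlocks_inj.mp h).1
  exact ⟨A, T, s, _, _, hT, hblocks.trans (by rw [hX]; rfl)⟩

theorem mem_centralizer_DSub_iff {U : GeneralLinearGroup (BIdx l p q) ℤ} :
    U ∈ Subgroup.centralizer (DSub l p q : Set (GeneralLinearGroup (BIdx l p q) ℤ)) ↔
      ∀ ε1 d2 e, Commute (Dmat l p q ε1 d2 e) (U : Matrix (BIdx l p q) (BIdx l p q) ℤ) := by
  rw [DSub, Subgroup.centralizer_closure, Subgroup.mem_centralizer_iff]
  constructor
  · intro h ε1 d2 e
    exact congrArg Units.val <|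
      h ⟨_, _, Dmat_mul_self ε1 d2 e, Dmat_mul_self ε1 d2 e⟩ (Or.inr ⟨ε1, d2, e, rfl⟩)
  · rintro h V (hV | ⟨ε1, d2, e, hV⟩) <;> apply Units.ext <;> rw [Units.val_mul, Units.val_mul]
    · rw [show (V : Matrix (BIdx l p q) (BIdx l p q) ℤ) = -1 from hV, neg_one_mul, mul_neg_one]
    · rw [hV]
      exact (h ε1 d2 e).eq

abbrev CentralizerParams (l p q : ℕ) :=
  congr2 l × (Fin (l + p) → ℤˣ) × GeneralLinearGroup (Fin q) ℤ

def leftSigns (σ : Fin (l + p) → ℤˣ) (i : Fin l) : ℤ := σ (Fin.castAdd p i)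

def rightSigns (σ : Fin (l + p) → ℤˣ) (j : Fin p) : ℤ := σ (Fin.natAdd l j)

theorem two_smul_halfMatrix_sub (g : congr2 l) (σ : Fin (l + p) → ℤˣ) :
    (2 : ℤ) • halfMatrix (((g : GLZ l) : Matrix (Fin l) (Fin l) ℤ) - diagonal (leftSigns σ)) =
      ((g : GLZ l) : Matrix (Fin l) (Fin l) ℤ) - diagonal (leftSigns σ) :=
  two_smul_halfMatrix ((mem_congr2_iff_two_dvd g.1 _).mp g.2)

def centralizerMatHom : CentralizerParams l p q →* Matrix (BIdx l p q) (BIdx l p q) ℤ where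
  toFun x := blockForm ((x.1 : GLZ l) : Matrix (Fin l) (Fin l) ℤ)
    (halfMatrix (((x.1 : GLZ l) : Matrix (Fin l) (Fin l) ℤ) - diagonal (leftSigns x.2.1)))
    (leftSigns x.2.1) (rightSigns x.2.1) x.2.2
  map_one' := by
    have hsub : halfMatrix (1 - diagonal (leftSigns (1 : Fin (l + p) → ℤˣ))) = 0 := by
      rw [show leftSigns (1 : Fin (l + p) → ℤˣ) = fun _ => 1 from rfl, diagonal_one, sub_self]
      rfl
    exact (congrArg (blockForm 1 · _ _ 1) hsub).trans blockForm_one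
  map_mul' x y := by
    rw [blockForm_mul, ← halfMatrix_two_smul (_ * _ + _),
      two_smul_mul_add_mul (two_smul_halfMatrix_sub x.1 x.2.1)
        (two_smul_halfMatrix_sub y.1 y.2.1), diagonal_mul_diagonal]
    rfl

theorem centralizerMatHom_mem (x : CentralizerParams l p q) :
    centralizerMatHom.toHomUnits x ∈
      Subgroup.centralizer (DSub l p q : Set (GeneralLinearGroup (BIdx l p q) ℤ)) :=
  mem_centralizer_DSub_iff.mpr fun ε1 d2 e => by
    rw [Dmat_eq_blockForm]
    exact blockForm_commute (two_smul_diagonal_eq_one_sub ε1) (two_smul_halfMatrix_sub x.1 x.2.1)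
      (Commute.one_left _) (scalar_commute (e : ℤ) (Commute.all _) _)

def centralizerHom : CentralizerParams l p q →*
    Subgroup.centralizer (DSub l p q : Set (GeneralLinearGroup (BIdx l p q) ℤ)) :=
  centralizerMatHom.toHomUnits.codRestrict _ centralizerMatHom_mem

theorem centralizerHom_injective :
    Function.Injective (centralizerHom (l := l) (p := p) (q := q)) := by
  intro x y h
  obtain ⟨hA, -, hs, ht, hC⟩ := blockForm_injective (congrArg (fun U => U.1.1) h)
  refine Prod.ext (Subtype.ext (Units.ext hA)) (Prod.ext (funext fun k => ?_) (Units.ext hC))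
  refine Fin.addCases (fun i => ?_) (fun j => ?_) k
  · exact Units.ext (congrFun hs i)
  · exact Units.ext (congrFun ht j)

theorem centralizerHom_surjective :
    Function.Surjective (centralizerHom (l := l) (p := p) (q := q)) := by
  rintro ⟨U, hU⟩
  obtain ⟨A, T, s, t, C, hT, hU'⟩ :=
    exists_blockForm_of_forall_commute_Dmat (mem_centralizer_DSub_iff.mp hU)
  obtain ⟨A', T', s', t', C', -, hV⟩ :=
    exists_blockForm_of_forall_commute_Dmat (mem_centralizer_DSub_iff.mp (inv_mem hU))
  -- `U⁻¹` has the same shape, so `U * U⁻¹ = 1` inverts `A`, the signs and `C` blockwise.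
  have hUV := U.mul_inv
  rw [hU', hV, blockForm_mul, ← blockForm_one] at hUV
  obtain ⟨hAA', -, hss', htt', hCC'⟩ := blockForm_injective hUV
  let σ : Fin (l + p) → ℤˣ := Fin.append (fun i => Units.mkOfMulEqOne _ _ (congrFun hss' i))
    (fun j => Units.mkOfMulEqOne _ _ (congrFun htt' j))
  have hleft : leftSigns σ = s := funext fun i => by simp [leftSigns, σ]
  have hright : rightSigns σ = t := funext fun j => by simp [rightSigns, σ]
  have hA : Units.mkOfMulEqOne A A' hAA' ∈ congr2 l :=
    (mem_congr2_iff_two_dvd _ fun i => σ (Fin.castAdd p i)).mpr fun i j =>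
      ⟨T i j, by
        change (A - diagonal (leftSigns σ)) i j = _
        rw [hleft, ← hT, Matrix.smul_apply, smul_eq_mul]⟩
  refine ⟨(⟨_, hA⟩, σ, Units.mkOfMulEqOne C C' hCC'), Subtype.ext (Units.ext ?_)⟩
  change blockForm A (halfMatrix (A - diagonal (leftSigns σ))) (leftSigns σ) (rightSigns σ) C = U
  rw [hleft, hright, ← hT, halfMatrix_two_smul, hU']

theorem stmt7_general (l p q : ℕ) :
    Nonempty
      (Subgroup.centralizer (DSub l p q : Set (Matrix.GeneralLinearGroup (BIdx l p q) ℤ)) ≃*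
        congr2 l × Multiplicative (Fin (l + p) → ZMod 2) ×
          Matrix.GeneralLinearGroup (Fin q) ℤ) := by
  let e := MulEquiv.ofBijective (centralizerHom (l := l) (p := p) (q := q))
    ⟨centralizerHom_injective, centralizerHom_surjective⟩
  exact ⟨e.symm.trans <| .prodCongr (.refl _) (.prodCongr (unitsIntPiMulEquiv _) (.refl _))⟩

/-- The centralizer of `D` in `GL_d(ℤ)` is isomorphic to
`Λ_l[2] × (ℤ/2)^{l+p} × GL_q(ℤ)`. -/
theorem stmt7 (l p q : ℕ) (hl : 1 ≤ l) :
    Nonempty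
      (Subgroup.centralizer (DSub l p q : Set (Matrix.GeneralLinearGroup (BIdx l p q) ℤ)) ≃*
        congr2 l × Multiplicative (Fin (l + p) → ZMod 2) ×
          Matrix.GeneralLinearGroup (Fin q) ℤ) :=
  stmt7_general l p q
end
end

section
/- For every integer l ≥ 1, the centralizer of the subgroup 𝓛 in GL_{2l}(ℤ) is isomorphic as a group to Λ_l[2] × (ℤ/2ℤ)^l. -/
noncomputable section

/-!
Write a matrix of `GL_{2l}(ℤ)` in block form `(A B; C D)`, where `A` collects the entries between
first basis vectors of the `2 × 2` blocks and `D` those between second ones. Commuting with the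
elements of `𝓛` with a single block `(1 1; 0 -1)`, which generate `𝓛`, means exactly `C = 0`,
`D` diagonal and `A = 2B + D`. Such a matrix is determined by `A` and `D`, and since `C = 0` the map
`M ↦ (A, D)` is multiplicative; for `M` invertible `D` has entries `±1`, so `A ≡ D ≡ 1 mod 2`.
Conversely every `A ∈ Λ_l[2]` and every sign vector `D` arise, with `B = (A - D) / 2`.
-/

namespace ScriptL

variable {l : ℕ}

def Lblock (ε : Fin l → Bool) (i : Fin l) : Matrix (Fin 2) (Fin 2) ℤ := if ε i then Bmat else 1

lemma Lmat_apply (ε : Fin l → Bool) (i j : Fin l) (c d : Fin 2) :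
    Lmat l ε (i, c) (j, d) = if i = j then Lblock ε i c d else 0 := by
  simp only [Lmat, Lblock, apply_ite (fun B : Matrix (Fin 2) (Fin 2) ℤ => B c d)]

section Entries

variable (ε : Fin l → Bool) (M : Matrix (Fin l × Fin 2) (Fin l × Fin 2) ℤ) (i j : Fin l)
  (c d : Fin 2)

lemma Lmat_mul_apply : (Lmat l ε * M) (i, c) (j, d) =
    Lblock ε i c 0 * M (i, 0) (j, d) + Lblock ε i c 1 * M (i, 1) (j, d) := by
  simp [Matrix.mul_apply, Fintype.sum_prod_type, Fin.sum_univ_two, Lmat_apply, ite_mul]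

lemma mul_Lmat_apply : (M * Lmat l ε) (i, c) (j, d) =
    M (i, c) (j, 0) * Lblock ε j 0 d + M (i, c) (j, 1) * Lblock ε j 1 d := by
  simp [Matrix.mul_apply, Fintype.sum_prod_type, Fin.sum_univ_two, Lmat_apply, mul_ite]

end Entries

lemma Lmat_mul_self (ε : Fin l → Bool) : Lmat l ε * Lmat l ε = 1 := by
  ext ⟨i, c⟩ ⟨j, d⟩
  rw [Lmat_mul_apply]
  by_cases hij : i = j
  · subst hij
    cases hε : ε i <;> fin_cases c <;> fin_cases d <;>
      simp [Lmat_apply, Lblock, Bmat, hε, Matrix.one_apply]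
  · simp [Lmat_apply, hij]

def LmatUnit (ε : Fin l → Bool) : GL2l l :=
  ⟨Lmat l ε, Lmat l ε, Lmat_mul_self ε, Lmat_mul_self ε⟩

def HasCentralizerShape (M : Matrix (Fin l × Fin 2) (Fin l × Fin 2) ℤ) : Prop :=
  ∀ i j, M (i, 1) (j, 0) = 0 ∧ (i ≠ j → M (i, 1) (j, 1) = 0) ∧
    M (i, 0) (j, 0) = 2 * M (i, 0) (j, 1) + M (i, 1) (j, 1)

section Shape

variable {M N : Matrix (Fin l × Fin 2) (Fin l × Fin 2) ℤ}

lemma commute_Lmat_iff : (∀ ε, Commute (Lmat l ε) M) ↔ HasCentralizerShape M := by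
  constructor
  · intro h i j
    -- test against the generators whose only nontrivial block sits at `i`, resp. at `j`
    have entry := fun (k : Fin l) (a b : Fin l × Fin 2) =>
      congrFun (congrFun (h fun m => decide (m = k)).eq a) b
    have e₁ := entry i (i, 1) (j, 0)
    have e₂ := entry i (i, 1) (j, 1)
    have e₃ := entry j (i, 0) (j, 1)
    simp only [Lmat_mul_apply, mul_Lmat_apply] at e₁ e₂ e₃
    by_cases hij : i = j
    · subst hij
      simp [Lblock, Bmat] at e₁ e₃
      exact ⟨by omega, fun h => absurd rfl h, by omega⟩
    · simp [Lblock, Bmat, hij, Ne.symm hij] at e₁ e₂ e₃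
      exact ⟨by omega, fun _ => by omega, by omega⟩
  · intro hM ε
    ext ⟨i, c⟩ ⟨j, d⟩
    rw [Lmat_mul_apply, mul_Lmat_apply]
    obtain ⟨h₁, h₂, h₃⟩ := hM i j
    by_cases hij : i = j
    · subst hij
      cases hε : ε i <;> fin_cases c <;> fin_cases d <;>
        simp [Lblock, Bmat, hε, Matrix.one_apply] <;> omega
    · have := h₂ hij
      cases hεi : ε i <;> cases hεj : ε j <;> fin_cases c <;> fin_cases d <;>
        simp [Lblock, Bmat, hεi, hεj, Matrix.one_apply] <;> omega

lemma HasCentralizerShape.mul (hM : HasCentralizerShape M) (hN : HasCentralizerShape N) :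
    HasCentralizerShape (M * N) :=
  commute_Lmat_iff.1 fun ε => (commute_Lmat_iff.2 hM ε).mul_right (commute_Lmat_iff.2 hN ε)

lemma hasCentralizerShape_one :
    HasCentralizerShape (1 : Matrix (Fin l × Fin 2) (Fin l × Fin 2) ℤ) :=
  commute_Lmat_iff.1 fun _ => Commute.one_right _

lemma mem_centralizer_scriptL_iff {M : GL2l l} :
    M ∈ Subgroup.centralizer (scriptL l : Set (GL2l l)) ↔ HasCentralizerShape M.val := by
  rw [scriptL, Subgroup.centralizer_closure, Subgroup.mem_centralizer_iff, ← commute_Lmat_iff]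
  constructor
  · intro h ε
    exact congrArg Units.val (h (LmatUnit ε) ⟨ε, rfl⟩)
  · rintro h g ⟨ε, hg⟩
    exact Units.ext (by rw [Units.val_mul, Units.val_mul, hg]; exact (h ε).eq)

def topLeft (M : Matrix (Fin l × Fin 2) (Fin l × Fin 2) ℤ) : Matrix (Fin l) (Fin l) ℤ :=
  M.submatrix (·, 0) (·, 0)

def bottomDiag (M : Matrix (Fin l × Fin 2) (Fin l × Fin 2) ℤ) : Fin l → ℤ :=
  fun i => M (i, 1) (i, 1)

lemma topLeft_one : topLeft (1 : Matrix (Fin l × Fin 2) (Fin l × Fin 2) ℤ) = 1 :=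
  Matrix.submatrix_one_embedding ⟨(·, 0), fun _ _ h => congrArg Prod.fst h⟩

lemma bottomDiag_one : bottomDiag (1 : Matrix (Fin l × Fin 2) (Fin l × Fin 2) ℤ) = 1 := by
  ext i
  simp [bottomDiag]

lemma topLeft_mul (hN : HasCentralizerShape N) : topLeft (M * N) = topLeft M * topLeft N := by
  ext i j
  simp [topLeft, Matrix.mul_apply, Fintype.sum_prod_type, (hN _ j).1]

lemma bottomDiag_mul (hM : HasCentralizerShape M) :
    bottomDiag (M * N) = bottomDiag M * bottomDiag N := by
  ext i
  simp only [bottomDiag, Matrix.mul_apply, Fintype.sum_prod_type, Fin.sum_univ_two, (hM i _).1,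
    zero_mul, zero_add, Pi.mul_apply]
  exact Finset.sum_eq_single i (fun k _ hk => by rw [(hM i k).2.1 (Ne.symm hk), zero_mul])
    (by simp)

lemma HasCentralizerShape.two_dvd_topLeft_sub (hM : HasCentralizerShape M) (i j : Fin l) :
    (2 : ℤ) ∣ (topLeft M - Matrix.diagonal (bottomDiag M)) i j := by
  obtain ⟨-, hoff, hA⟩ := hM i j
  rcases eq_or_ne i j with rfl | hij
  · simp [topLeft, bottomDiag, hA]
  · simp [topLeft, hA, hoff hij, hij]

lemma HasCentralizerShape.ext (hM : HasCentralizerShape M) (hN : HasCentralizerShape N)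
    (hA : topLeft M = topLeft N) (hD : bottomDiag M = bottomDiag N) : M = N := by
  have bottomRight : ∀ i j, M (i, 1) (j, 1) = N (i, 1) (j, 1) := by
    intro i j
    rcases eq_or_ne i j with rfl | hij
    · exact congrFun hD i
    · rw [(hM i j).2.1 hij, (hN i j).2.1 hij]
  ext ⟨i, c⟩ ⟨j, d⟩
  have hAij : M (i, 0) (j, 0) = N (i, 0) (j, 0) := congrFun (congrFun hA i) j
  have := bottomRight i j
  have := (hM i j).2.2
  have := (hN i j).2.2
  fin_cases c <;> fin_cases d
  · exact hAij
  · simp only [Fin.zero_eta, Fin.mk_one]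
    omega
  · exact (hM i j).1.trans (hN i j).1.symm
  · exact bottomRight i j

end Shape

section OfBlocks

/-- The integer division is exact only when `P ≡ diag q mod 2`, which the lemmas below assume. -/
def ofBlocks (P : Matrix (Fin l) (Fin l) ℤ) (q : Fin l → ℤ) :
    Matrix (Fin l × Fin 2) (Fin l × Fin 2) ℤ :=
  Matrix.of fun a b =>
    !![P a.1 b.1, (P - Matrix.diagonal q) a.1 b.1 / 2; 0, Matrix.diagonal q a.1 b.1] a.2 b.2

variable {P P' : Matrix (Fin l) (Fin l) ℤ} {q q' : Fin l → ℤ}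

lemma topLeft_ofBlocks : topLeft (ofBlocks P q) = P := rfl

lemma bottomDiag_ofBlocks : bottomDiag (ofBlocks P q) = q := by
  ext i
  simp [bottomDiag, ofBlocks]

lemma hasCentralizerShape_ofBlocks (h : ∀ i j, (2 : ℤ) ∣ (P - Matrix.diagonal q) i j) :
    HasCentralizerShape (ofBlocks P q) := by
  intro i j
  refine ⟨rfl, fun hij => by simp [ofBlocks, hij], ?_⟩
  simp only [ofBlocks, Matrix.of_apply, Matrix.cons_val', Matrix.cons_val_zero,
    Matrix.cons_val_one, Matrix.empty_val', Matrix.cons_val_fin_one]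
  rw [Int.mul_ediv_cancel' (h i j), Matrix.sub_apply]
  ring

lemma ofBlocks_mul_ofBlocks (h : ∀ i j, (2 : ℤ) ∣ (P - Matrix.diagonal q) i j)
    (h' : ∀ i j, (2 : ℤ) ∣ (P' - Matrix.diagonal q') i j) (hP : P * P' = 1) (hq : q * q' = 1) :
    ofBlocks P q * ofBlocks P' q' = 1 := by
  have hM := hasCentralizerShape_ofBlocks h
  have hN := hasCentralizerShape_ofBlocks h'
  refine (hM.mul hN).ext hasCentralizerShape_one ?_ ?_
  · rw [topLeft_mul hN, topLeft_ofBlocks, topLeft_ofBlocks, hP, topLeft_one]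
  · rw [bottomDiag_mul hM, bottomDiag_ofBlocks, bottomDiag_ofBlocks, hq, bottomDiag_one]

end OfBlocks

lemma mem_congr2_iff {A : GLZ l} : A ∈ congr2 l ↔ ∀ i j, (2 : ℤ) ∣ (A.val - 1) i j := by
  simp only [congr2, MonoidHom.mem_ker, Units.ext_iff, ← Matrix.ext_iff]
  refine forall₂_congr fun i j => ?_
  rw [Matrix.GeneralLinearGroup.map_apply, Units.val_one, Matrix.sub_apply, Int.coe_castRingHom]
  rcases eq_or_ne i j with rfl | hij
  · simpa [eq_comm] using ZMod.intCast_eq_intCast_iff_dvd_sub 1 (A i i) 2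
  · simpa [hij] using ZMod.intCast_zmod_eq_zero_iff_dvd (A i j) 2

lemma two_dvd_sub_one_iff_two_dvd_sub_diagonal (P : Matrix (Fin l) (Fin l) ℤ) (s : Fin l → ℤˣ)
    (i j : Fin l) :
    (2 : ℤ) ∣ (P - 1) i j ↔ (2 : ℤ) ∣ (P - Matrix.diagonal fun k => (s k : ℤ)) i j := by
  rcases eq_or_ne i j with rfl | hij
  · simp only [Matrix.sub_apply, Matrix.one_apply_eq, Matrix.diagonal_apply_eq]
    rcases Int.units_eq_one_or (s i) with h | h
    · simp [h]
    · simp only [h, Units.val_neg, Units.val_one]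
      omega
  · simp [hij]

abbrev centralizerL (l : ℕ) : Subgroup (GL2l l) := Subgroup.centralizer (scriptL l : Set (GL2l l))

lemma hasCentralizerShape_of_mem (M : centralizerL l) : HasCentralizerShape (M : GL2l l).val :=
  mem_centralizer_scriptL_iff.1 M.2

def topLeftHom (l : ℕ) : centralizerL l →* Matrix (Fin l) (Fin l) ℤ where
  toFun M := topLeft (M : GL2l l).val
  map_one' := topLeft_one
  map_mul' _ N := topLeft_mul (hasCentralizerShape_of_mem N)

def bottomDiagHom (l : ℕ) : centralizerL l →* (Fin l → ℤ) where
  toFun M := bottomDiag (M : GL2l l).val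
  map_one' := bottomDiag_one
  map_mul' M _ := bottomDiag_mul (hasCentralizerShape_of_mem M)

lemma toHomUnits_topLeftHom_mem_congr2 (M : centralizerL l) :
    (topLeftHom l).toHomUnits M ∈ congr2 l := by
  refine mem_congr2_iff.2 fun i j => ?_
  rw [two_dvd_sub_one_iff_two_dvd_sub_diagonal _
    (MulEquiv.piUnits ((bottomDiagHom l).toHomUnits M))]
  exact (hasCentralizerShape_of_mem M).two_dvd_topLeft_sub i j

def blockHom (l : ℕ) : centralizerL l →* congr2 l × (Fin l → ℤˣ) :=
  ((topLeftHom l).toHomUnits.codRestrict _ toHomUnits_topLeftHom_mem_congr2).prod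
    (MulEquiv.piUnits.toMonoidHom.comp (bottomDiagHom l).toHomUnits)

lemma blockHom_injective : Function.Injective (blockHom l) := by
  intro M N h
  have hA : topLeft (M : GL2l l).val = topLeft (N : GL2l l).val :=
    congrArg (fun x => ((x.1 : GLZ l) : Matrix (Fin l) (Fin l) ℤ)) h
  have hD : bottomDiag (M : GL2l l).val = bottomDiag (N : GL2l l).val :=
    funext fun i => congrArg (fun x => (x.2 i : ℤ)) h
  exact Subtype.ext (Units.ext
    ((hasCentralizerShape_of_mem M).ext (hasCentralizerShape_of_mem N) hA hD))

lemma blockHom_surjective : Function.Surjective (blockHom l) := by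
  rintro ⟨⟨P, hP⟩, s⟩
  have h := fun i j =>
    (two_dvd_sub_one_iff_two_dvd_sub_diagonal P.val s i j).1 (mem_congr2_iff.1 hP i j)
  have h' := fun i j => (two_dvd_sub_one_iff_two_dvd_sub_diagonal (P⁻¹).val s⁻¹ i j).1
    (mem_congr2_iff.1 (inv_mem hP) i j)
  let M : GL2l l :=
    ⟨ofBlocks P.val fun i => (s i : ℤ), ofBlocks (P⁻¹).val fun i => ((s i)⁻¹ : ℤˣ),
      ofBlocks_mul_ofBlocks h h' P.mul_inv (by ext; simp),
      ofBlocks_mul_ofBlocks h' h P.inv_mul (by ext; simp)⟩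
  refine ⟨⟨M, mem_centralizer_scriptL_iff.2 (hasCentralizerShape_ofBlocks h)⟩, ?_⟩
  exact Prod.ext (Subtype.ext (Units.ext topLeft_ofBlocks))
    (funext fun i => Units.ext (congrFun bottomDiag_ofBlocks i))

end ScriptL

theorem stmt8_general (l : ℕ) :
    Nonempty (Subgroup.centralizer (scriptL l : Set (GL2l l)) ≃*
      congr2 l × Multiplicative (Fin l → ZMod 2)) := by
  have signEquiv : ℤˣ ≃* Multiplicative (ZMod 2) :=
    mulEquivOfPrimeCardEq (p := 2) (by simp [Nat.card_eq_fintype_card])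
      (by simp [Nat.card_eq_fintype_card])
  exact ⟨(MulEquiv.ofBijective (ScriptL.blockHom l)
      ⟨ScriptL.blockHom_injective, ScriptL.blockHom_surjective⟩).trans
    (MulEquiv.prodCongr (MulEquiv.refl _)
      ((MulEquiv.piCongrRight fun _ => signEquiv).trans (MulEquiv.funMultiplicative _ _).symm))⟩

/-- The centralizer of `𝓛` in `GL_{2l}(ℤ)` is isomorphic to `Λ_l[2] × (ℤ/2)^l`. -/
theorem stmt8 (l : ℕ) (hl : 1 ≤ l) :
    Nonempty (Subgroup.centralizer (scriptL l : Set (GL2l l)) ≃*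
      congr2 l × Multiplicative (Fin l → ZMod 2)) :=
  stmt8_general l
end
end

section
/- For every integer l ≥ 1, the map θ sending A = (a_{ij}) ∈ Λ_l[2] to the 2l × 2l integer matrix whose (i,j)-th 2×2 block is the matrix with rows (a_{ij}, (a_{ij} − δ_{ij})/2) and (0, δ_{ij}) (where δ is the Kronecker delta; these entries are integers since A ≡ I_l mod 2) is a well-defined injective group homomorphism from Λ_l[2] into GL_{2l}(ℤ), whose image is a subgroup of index 2^l in the centralizer of 𝓛 in GL_{2l}(ℤ). In particular, the principal level 2 congruence subgroup Λ_l[2] is isomorphic to a finite-index subgroup of the centralizer in GL_{2l}(ℤ) of a finite subgroup. -/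
noncomputable section

/-!
View a matrix indexed by `Fin l × Fin 2` as a `2 × 2` matrix of `l × l` blocks. The generators of
`𝓛` become `!![1, E; 0, 1 - 2 • E]` with `E` diagonal with entries in `{0, 1}`, so
`M = !![P, Q; R, S]` centralizes `𝓛` iff `R = 0`, `S` is diagonal and `P = 2 • Q + S`.
On this block upper triangular group both diagonal blocks are multiplicative, and `M ↦ diag S`
maps it onto the `2 ^ l` diagonal sign vectors with kernel `{S = 1}`, which is exactly the image
of `θ A = !![A, (A - 1) / 2; 0, 1]`. That `θ` is multiplicative is the identity
`(2 • X + 1) * (2 • Y + 1) = 2 • (X + Y + 2 • (X * Y)) + 1`.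
-/

open Matrix

namespace Matrix

section FinTwoBlocks

variable {n R : Type*} [Fintype n] [Ring R]

variable (n R) in
def finTwoBlocks : Matrix (n × Fin 2) (n × Fin 2) R ≃+* Matrix (Fin 2) (Fin 2) (Matrix n n R) :=
  (reindexRingEquiv R (Equiv.prodComm n (Fin 2))).trans (compRingEquiv (Fin 2) n R).symm

@[simp]
lemma finTwoBlocks_apply (M : Matrix (n × Fin 2) (n × Fin 2) R) (s t : Fin 2) (i j : n) :
    finTwoBlocks n R M s t i j = M (i, s) (j, t) :=
  rfl

lemma commute_finTwoBlocks_iff {M N : Matrix (n × Fin 2) (n × Fin 2) R} :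
    Commute (finTwoBlocks n R M) (finTwoBlocks n R N) ↔ Commute M N :=
  commute_map_iff (finTwoBlocks n R).injective

end FinTwoBlocks

lemma mul_apply_diag_of_apply_one_zero_eq_zero {R : Type*} [Ring R]
    {B C : Matrix (Fin 2) (Fin 2) R} (hB : B 1 0 = 0) (hC : C 1 0 = 0) (s : Fin 2) :
    (B * C) s s = B s s * C s s := by
  fin_cases s <;> simp [mul_apply, Fin.sum_univ_two, hB, hC]

lemma IsDiag.commute_diagonal {n R : Type*} [Fintype n] [DecidableEq n] [CommRing R]
    {S : Matrix n n R} (hS : S.IsDiag) (d : n → R) : Commute (diagonal d) S := by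
  rw [← hS.diagonal_diag]
  exact Matrix.commute_diagonal d S.diag

section HalfSubOne

variable {n : Type*} [DecidableEq n]

def halfSubOne (A : Matrix n n ℤ) : Matrix n n ℤ := (A - 1).map (· / 2)

lemma halfSubOne_two_smul_add_one (X : Matrix n n ℤ) : halfSubOne (2 • X + 1) = X := by
  ext i j
  simp [halfSubOne]

lemma halfSubOne_one : halfSubOne (1 : Matrix n n ℤ) = 0 := by
  simp [halfSubOne]

end HalfSubOne

end Matrix

section Centralizer

variable {l : ℕ}

def boolDiag (ε : Fin l → Bool) : Matrix (Fin l) (Fin l) ℤ :=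
  diagonal fun i => if ε i then 1 else 0

lemma boolDiag_const_true : boolDiag (fun _ : Fin l => true) = 1 := by
  simp [boolDiag]

lemma finTwoBlocks_Lmat (ε : Fin l → Bool) :
    finTwoBlocks (Fin l) ℤ (Lmat l ε) = !![1, boolDiag ε; 0, 1 - 2 • boolDiag ε] := by
  ext s t i j
  rcases eq_or_ne i j with rfl | h
  · fin_cases s <;> fin_cases t <;> cases hε : ε i <;>
      simp [Lmat, Bmat, boolDiag, hε, -nsmul_eq_mul]
  · fin_cases s <;> fin_cases t <;> simp [Lmat, boolDiag, h, -nsmul_eq_mul]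

lemma Lmat_mul_self (ε : Fin l → Bool) : Lmat l ε * Lmat l ε = 1 := by
  have hE : boolDiag ε * boolDiag ε = boolDiag ε := by
    simp [boolDiag, diagonal_mul_diagonal]
  apply (finTwoBlocks (Fin l) ℤ).injective
  rw [map_mul, map_one, finTwoBlocks_Lmat, mul_fin_two, one_fin_two]
  simp only [mul_one, one_mul, mul_zero, zero_mul, add_zero, zero_add, mul_sub, sub_mul,
    smul_mul_assoc, mul_smul_comm, hE]
  rw [show boolDiag ε + (boolDiag ε - 2 • boolDiag ε) = 0 by abel,
    show 1 - 2 • boolDiag ε - 2 • (boolDiag ε - 2 • boolDiag ε) = 1 by abel]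

lemma forall_commute_Lmat_iff (M : Matrix (Fin l × Fin 2) (Fin l × Fin 2) ℤ) :
    (∀ ε, Commute (Lmat l ε) M) ↔
      finTwoBlocks _ _ M 1 0 = 0 ∧ (finTwoBlocks _ _ M 1 1).IsDiag ∧
        finTwoBlocks _ _ M 0 0 = 2 • finTwoBlocks _ _ M 0 1 + finTwoBlocks _ _ M 1 1 := by
  simp_rw [← commute_finTwoBlocks_iff, finTwoBlocks_Lmat]
  generalize finTwoBlocks (Fin l) ℤ M = B
  rw [eta_fin_two B]
  simp_rw [commute_iff_eq, mul_fin_two]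
  simp only [one_mul, zero_mul, zero_add, mul_one, mul_zero, add_zero,
    EmbeddingLike.apply_eq_iff_eq, vecCons_inj, add_eq_left, and_true, of_apply, cons_val',
    cons_val_zero, cons_val_fin_one, cons_val_one]
  constructor
  · intro h
    obtain ⟨⟨hR, hQ⟩, -⟩ := h fun _ => true
    simp only [boolDiag_const_true, one_mul, mul_one] at hR hQ
    refine ⟨hR, fun i j hij => ?_, ?_⟩
    · -- for `E = single i i 1` the `(i, j)` entry of the upper right block equation is `S i j = 0`
      have h2 := congr_fun₂ (h fun k => k = i).1.2 i j
      simpa [boolDiag, mul_sub, mul_diagonal, hij.symm, -nsmul_eq_mul] using h2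
    · rw [mul_sub, mul_one, mul_smul_comm, mul_one] at hQ
      rw [two_smul, ← sub_eq_iff_eq_add.2 hQ]
      abel
  · rintro ⟨hR, hS, hP⟩ ε
    have hES : Commute (boolDiag ε) (B 1 1) := hS.commute_diagonal _
    simp only [hR, hP, mul_zero, zero_mul, zero_add, true_and]
    constructor
    · rw [add_mul, mul_sub, mul_one, hES.eq, smul_mul_assoc, mul_smul_comm]
      abel
    · rw [sub_mul, mul_sub, one_mul, mul_one, smul_mul_assoc, mul_smul_comm, hES.eq]

lemma mem_centralizer_scriptL_iff (M : GL2l l) :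
    M ∈ Subgroup.centralizer (scriptL l : Set (GL2l l)) ↔
      finTwoBlocks (Fin l) ℤ ↑M 1 0 = 0 ∧ (finTwoBlocks (Fin l) ℤ ↑M 1 1).IsDiag ∧
        finTwoBlocks (Fin l) ℤ ↑M 0 0 =
          2 • finTwoBlocks (Fin l) ℤ ↑M 0 1 + finTwoBlocks (Fin l) ℤ ↑M 1 1 := by
  rw [← forall_commute_Lmat_iff, scriptL, Subgroup.centralizer_closure,
    Subgroup.mem_centralizer_iff]
  constructor
  · intro h ε
    exact congrArg Units.val
      (h ⟨Lmat l ε, Lmat l ε, Lmat_mul_self ε, Lmat_mul_self ε⟩ ⟨ε, rfl⟩)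
  · rintro h g ⟨ε, hg⟩
    exact Units.ext (by rw [Units.val_mul, Units.val_mul, hg]; exact (h ε).eq)

end Centralizer

section Theta

variable {l : ℕ}

lemma mem_congr2_iff {A : GLZ l} :
    A ∈ congr2 l ↔ ∃ X, (A : Matrix (Fin l) (Fin l) ℤ) = 2 • X + 1 := by
  rw [congr2, MonoidHom.mem_ker, Units.ext_iff, Units.val_one,
    ← Matrix.map_one (Int.cast : ℤ → ZMod 2) Int.cast_zero Int.cast_one]
  constructor
  · intro h
    refine ⟨halfSubOne A, ext fun i j => ?_⟩
    have h2 := (ZMod.intCast_eq_intCast_iff_dvd_sub _ _ 2).1 (congr_fun₂ h i j).symm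
    rw [Matrix.add_apply, Matrix.smul_apply, halfSubOne, map_apply, Matrix.sub_apply, nsmul_eq_mul]
    push_cast at h2
    omega
  · rintro ⟨X, hX⟩
    ext i j
    simp only [GeneralLinearGroup.map, Units.coe_map, RingHom.toMonoidHom_eq_coe,
      MonoidHom.coe_coe, RingHom.mapMatrix_apply, map_apply, hX, Matrix.add_apply, map_add,
      two_nsmul, CharTwo.add_self_eq_zero, zero_add, eq_intCast]

lemma two_smul_halfSubOne_add_one (A : congr2 l) :
    2 • halfSubOne ((A : GLZ l) : Matrix (Fin l) (Fin l) ℤ) + 1 = (A : GLZ l) := by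
  obtain ⟨X, hX⟩ := mem_congr2_iff.1 A.2
  rw [hX, halfSubOne_two_smul_add_one]

lemma two_mul_halfSubOne_apply (A : congr2 l) (i j : Fin l) :
    2 * halfSubOne ((A : GLZ l) : Matrix (Fin l) (Fin l) ℤ) i j =
      ((A : GLZ l) : Matrix (Fin l) (Fin l) ℤ) i j - if i = j then 1 else 0 := by
  have h := congr_fun₂ (two_smul_halfSubOne_add_one A) i j
  rw [Matrix.add_apply, Matrix.smul_apply, one_apply, two_nsmul] at h
  omega

lemma halfSubOne_mul (A B : congr2 l) :
    halfSubOne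
        (((A : GLZ l) : Matrix (Fin l) (Fin l) ℤ) * ((B : GLZ l) : Matrix (Fin l) (Fin l) ℤ)) =
      ((A : GLZ l) : Matrix (Fin l) (Fin l) ℤ) * halfSubOne (B : GLZ l) +
        halfSubOne (A : GLZ l) := by
  set X := halfSubOne ((A : GLZ l) : Matrix (Fin l) (Fin l) ℤ)
  set Y := halfSubOne ((B : GLZ l) : Matrix (Fin l) (Fin l) ℤ)
  rw [← two_smul_halfSubOne_add_one A, ← two_smul_halfSubOne_add_one B,
    show (2 • X + 1) * (2 • Y + 1) = 2 • (X + Y + 2 • (X * Y)) + 1 by noncomm_ring,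
    halfSubOne_two_smul_add_one]
  noncomm_ring

def thetaMat : congr2 l →* Matrix (Fin l × Fin 2) (Fin l × Fin 2) ℤ where
  toFun A := (finTwoBlocks _ _).symm
    !![((A : GLZ l) : Matrix (Fin l) (Fin l) ℤ), halfSubOne (A : GLZ l); 0, 1]
  map_one' := by
    rw [OneMemClass.coe_one, Units.val_one, halfSubOne_one, ← one_fin_two, map_one]
  map_mul' A B := by
    apply (finTwoBlocks _ _).injective
    simp only [map_mul, RingEquiv.apply_symm_apply, mul_fin_two, halfSubOne_mul, Subgroup.coe_mul,
      Units.val_mul, mul_zero, zero_mul, add_zero, zero_add, mul_one]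

def theta : congr2 l →* GL2l l := thetaMat.toHomUnits

lemma finTwoBlocks_theta (A : congr2 l) :
    finTwoBlocks _ _ (theta A : Matrix (Fin l × Fin 2) (Fin l × Fin 2) ℤ) =
      !![((A : GLZ l) : Matrix (Fin l) (Fin l) ℤ), halfSubOne (A : GLZ l); 0, 1] :=
  RingEquiv.apply_symm_apply _ _

lemma theta_apply (A : congr2 l) (i j : Fin l) (s t : Fin 2) :
    (theta A : Matrix (Fin l × Fin 2) (Fin l × Fin 2) ℤ) (i, s) (j, t) =
      !![((A : GLZ l) : Matrix (Fin l) (Fin l) ℤ), halfSubOne (A : GLZ l); 0, 1] s t i j :=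
  congr_fun₂ (congr_fun₂ (finTwoBlocks_theta A) s t) i j

lemma theta_injective : Function.Injective (theta (l := l)) := fun A B h =>
  Subtype.ext <| Units.ext <| ext fun i j => by
    simpa [theta_apply] using
      congr_arg (fun M : GL2l l => (M : Matrix (Fin l × Fin 2) (Fin l × Fin 2) ℤ) (i, 0) (j, 0))
        h

lemma range_theta_le_centralizer :
    (theta (l := l)).range ≤ Subgroup.centralizer (scriptL l : Set (GL2l l)) := by
  rintro _ ⟨A, rfl⟩
  rw [mem_centralizer_scriptL_iff, finTwoBlocks_theta]
  simpa [isDiag_one] using (two_smul_halfSubOne_add_one A).symm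

end Theta

section Index

variable {l : ℕ}

local notation "𝒞" => Subgroup.centralizer (scriptL l : Set (GL2l l))

lemma finTwoBlocks_apply_one_zero_of_mem_centralizer {M : GL2l l} (hM : M ∈ 𝒞) :
    finTwoBlocks (Fin l) ℤ ↑M 1 0 = 0 :=
  ((mem_centralizer_scriptL_iff M).1 hM).1

def diagBlockHom (s : Fin 2) : 𝒞 →* Matrix (Fin l) (Fin l) ℤ where
  toFun M :=
    finTwoBlocks (Fin l) ℤ ((M : GL2l l) : Matrix (Fin l × Fin 2) (Fin l × Fin 2) ℤ) s s
  map_one' := by simp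
  map_mul' M N := by
    rw [Subgroup.coe_mul, Units.val_mul, map_mul]
    exact mul_apply_diag_of_apply_one_zero_eq_zero
      (finTwoBlocks_apply_one_zero_of_mem_centralizer M.2)
      (finTwoBlocks_apply_one_zero_of_mem_centralizer N.2) s

lemma diagBlockHom_apply (s : Fin 2) (M : 𝒞) :
    diagBlockHom s M =
      finTwoBlocks (Fin l) ℤ ((M : GL2l l) : Matrix (Fin l × Fin 2) (Fin l × Fin 2) ℤ) s s :=
  rfl

lemma isDiag_diagBlockHom_one (M : 𝒞) : (diagBlockHom 1 M).IsDiag :=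
  ((mem_centralizer_scriptL_iff _).1 M.2).2.1

lemma mem_range_theta_iff (M : GL2l l) :
    M ∈ (theta (l := l)).range ↔ M ∈ 𝒞 ∧ finTwoBlocks (Fin l) ℤ ↑M 1 1 = 1 := by
  constructor
  · rintro ⟨A, rfl⟩
    exact ⟨range_theta_le_centralizer ⟨A, rfl⟩, by rw [finTwoBlocks_theta]; rfl⟩
  · rintro ⟨hM, hS⟩
    obtain ⟨hR, -, hP⟩ := (mem_centralizer_scriptL_iff M).1 hM
    rw [hS] at hP
    set A : GLZ l := (diagBlockHom 0).toHomUnits ⟨M, hM⟩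
    have hA : (A : Matrix (Fin l) (Fin l) ℤ) = _ := hP
    refine ⟨⟨A, mem_congr2_iff.2 ⟨_, hA⟩⟩, Units.ext ((finTwoBlocks _ _).injective ?_)⟩
    rw [finTwoBlocks_theta]
    ext1 s t
    fin_cases s <;> fin_cases t <;>
      simp [hA, hP, hR, hS, halfSubOne_two_smul_add_one, -nsmul_eq_mul]

def lowerDiagHom : 𝒞 →* (Fin l → ℤ) where
  toFun M := (diagBlockHom 1 M).diag
  map_one' := by simp
  map_mul' M N := by
    ext i
    rw [map_mul, ← (isDiag_diagBlockHom_one M).diagonal_diag]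
    simp [diagonal_mul]

lemma ker_toHomUnits_lowerDiagHom :
    lowerDiagHom.toHomUnits.ker = (theta (l := l)).range.subgroupOf 𝒞 := by
  ext M
  rw [MonoidHom.mem_ker, Subgroup.mem_subgroupOf, mem_range_theta_iff, Units.ext_iff]
  simp only [M.2, true_and, MonoidHom.coe_toHomUnits, Units.val_one, ← diagBlockHom_apply]
  constructor
  · intro h
    rw [← (isDiag_diagBlockHom_one M).diagonal_diag]
    exact (congrArg diagonal h).trans diagonal_one
  · intro h
    exact (congrArg diag h).trans diag_one

def doubledDiagonal : (Fin l → ℤ) →+* Matrix (Fin l × Fin 2) (Fin l × Fin 2) ℤ :=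
  (finTwoBlocks _ _).symm.toRingHom.comp ((scalar (Fin 2)).comp (diagonalRingHom (Fin l) ℤ))

lemma finTwoBlocks_doubledDiagonal (d : Fin l → ℤ) :
    finTwoBlocks _ _ (doubledDiagonal d) = !![diagonal d, 0; 0, diagonal d] := by
  simp [doubledDiagonal, diagonal_fin_two]

lemma toHomUnits_lowerDiagHom_surjective :
    Function.Surjective (lowerDiagHom (l := l)).toHomUnits := by
  intro u
  have hD : Units.map doubledDiagonal.toMonoidHom u ∈ 𝒞 := by
    simp [mem_centralizer_scriptL_iff, finTwoBlocks_doubledDiagonal, isDiag_diagonal]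
  refine ⟨⟨_, hD⟩, Units.ext ?_⟩
  simp [lowerDiagHom, diagBlockHom_apply, finTwoBlocks_doubledDiagonal]

lemma relIndex_range_theta : (theta (l := l)).range.relIndex 𝒞 = 2 ^ l := by
  rw [Subgroup.relIndex, ← ker_toHomUnits_lowerDiagHom, Subgroup.index_ker,
    MonoidHom.range_eq_top.2 toHomUnits_lowerDiagHom_surjective, Subgroup.card_top,
    Nat.card_congr MulEquiv.piUnits.toEquiv, Nat.card_pi]
  simp [Nat.card_eq_fintype_card]

end Index

theorem stmt9_general (l : ℕ) :
    ∃ θ : congr2 l →* GL2l l,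
      (∀ (A : congr2 l) (i j : Fin l),
        ((θ A : GL2l l) : Matrix (Fin l × Fin 2) (Fin l × Fin 2) ℤ) (i, 0) (j, 0) =
            ((A : GLZ l) : Matrix (Fin l) (Fin l) ℤ) i j ∧
        2 * ((θ A : GL2l l) : Matrix (Fin l × Fin 2) (Fin l × Fin 2) ℤ) (i, 0) (j, 1) =
            ((A : GLZ l) : Matrix (Fin l) (Fin l) ℤ) i j - (if i = j then 1 else 0) ∧
        ((θ A : GL2l l) : Matrix (Fin l × Fin 2) (Fin l × Fin 2) ℤ) (i, 1) (j, 0) = 0 ∧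
        ((θ A : GL2l l) : Matrix (Fin l × Fin 2) (Fin l × Fin 2) ℤ) (i, 1) (j, 1) =
            (if i = j then 1 else 0)) ∧
      Function.Injective θ ∧
      θ.range ≤ Subgroup.centralizer (scriptL l : Set (GL2l l)) ∧
      θ.range.relIndex (Subgroup.centralizer (scriptL l : Set (GL2l l))) = 2 ^ l := by
  refine ⟨theta, fun A i j => ?_, theta_injective, range_theta_le_centralizer,
    relIndex_range_theta⟩
  simp [theta_apply, two_mul_halfSubOne_apply, one_apply]

/-- The explicit embedding `θ : Λ_l[2] → GL_{2l}(ℤ)` is an injective homomorphism whose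
image has index `2^l` in the centralizer of `𝓛`. -/
theorem stmt9 (l : ℕ) (hl : 1 ≤ l) :
    ∃ θ : congr2 l →* GL2l l,
      (∀ (A : congr2 l) (i j : Fin l),
        ((θ A : GL2l l) : Matrix (Fin l × Fin 2) (Fin l × Fin 2) ℤ) (i, 0) (j, 0) =
            ((A : GLZ l) : Matrix (Fin l) (Fin l) ℤ) i j ∧
        2 * ((θ A : GL2l l) : Matrix (Fin l × Fin 2) (Fin l × Fin 2) ℤ) (i, 0) (j, 1) =
            ((A : GLZ l) : Matrix (Fin l) (Fin l) ℤ) i j - (if i = j then 1 else 0) ∧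
        ((θ A : GL2l l) : Matrix (Fin l × Fin 2) (Fin l × Fin 2) ℤ) (i, 1) (j, 0) = 0 ∧
        ((θ A : GL2l l) : Matrix (Fin l × Fin 2) (Fin l × Fin 2) ℤ) (i, 1) (j, 1) =
            (if i = j then 1 else 0)) ∧
      Function.Injective θ ∧
      θ.range ≤ Subgroup.centralizer (scriptL l : Set (GL2l l)) ∧
      θ.range.relIndex (Subgroup.centralizer (scriptL l : Set (GL2l l))) = 2 ^ l :=
  stmt9_general l
end
end

section
/- Let l ≥ 1, p ≥ 0, q ≥ 0 be integers, set d = 2l + p + q, and let D be the subgroup of GL_d(ℤ) generated by −I_d together with all block-diagonal matrices Diag(D₁, D₂, ε·I_q) with D₁ ∈ 𝓛, D₂ diagonal in GL_p(ℤ), ε ∈ {±1}. Then every matrix M ∈ GL_d(ℤ) centralizing D is block-diagonal with respect to the decomposition d = 2l + p + q: M = Diag(M₁₁, M₂₂, M₃₃) with M₁₁ of size 2l × 2l, M₂₂ of size p × p, and M₃₃ of size q × q; moreover M₂₂ is a diagonal matrix with entries ±1. -/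
noncomputable section

/-!
The diagonal sign matrices `Diag(I_{2l}, D₂, ε I_q)` lie in `D`, and a matrix commuting with a
diagonal matrix vanishes at every entry `(a, c)` where the diagonal entries at `a` and `c` differ.
Flipping the sign of the `q`-block separates it from the rest, and flipping the sign of a single
middle index `i` kills row and column `i` of `M` off the diagonal. Then `M_{ii}` is a unit of `ℤ`,
since `(M M⁻¹)_{ii} = M_{ii} (M⁻¹)_{ii}`.
-/

namespace Matrix

variable {n R : Type*} [Fintype n] [DecidableEq n] [CommRing R]

theorem apply_eq_zero_of_commute_diagonal_s12 [NoZeroDivisors R] {A : Matrix n n R} {d : n → R}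
    (h : Commute (diagonal d) A) {i j : n} (hd : d i ≠ d j) : A i j = 0 := by
  have hij : d i * A i j = A i j * d j := by
    simpa [diagonal_mul, mul_diagonal] using congr_fun₂ h.eq i j
  have : (d i - d j) * A i j = 0 := by rw [sub_mul, hij, mul_comm, sub_self]
  exact (mul_eq_zero.mp this).resolve_left (sub_ne_zero.mpr hd)

def GeneralLinearGroup.diagonal (s : n → Rˣ) : GL n R :=
  Units.map (diagonalRingHom n R : (n → R) →* Matrix n n R) (MulEquiv.piUnits.symm s)

@[simp]
theorem GeneralLinearGroup.coe_diagonal (s : n → Rˣ) :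
    (GeneralLinearGroup.diagonal s : Matrix n n R) = Matrix.diagonal fun i => (s i : R) :=
  rfl

theorem GeneralLinearGroup.isUnit_apply_self_of_row_eq_zero (A : GL n R) {i : n}
    (h : ∀ j, j ≠ i → (A : Matrix n n R) i j = 0) : IsUnit ((A : Matrix n n R) i i) := by
  have hAA : ((A : Matrix n n R) * (A⁻¹ : GL n R)) i i = 1 := by simp
  rw [mul_apply, Finset.sum_eq_single i (fun j _ hj => by rw [h j hj, zero_mul])
    (by simp)] at hAA
  exact .of_mul_eq_one _ hAA

end Matrix

open Matrix

def blockSigns (l : ℕ) {p q : ℕ} (d2 : Fin p → ℤˣ) (e : ℤˣ) : BIdx l p q → ℤˣ :=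
  Sum.elim 1 (Sum.elim d2 fun _ => e)

theorem Dmat_eq_diagonal_blockSigns (l p q : ℕ) (d2 : Fin p → ℤˣ) (e : ℤˣ) :
    Dmat l p q (fun _ => false) d2 e = diagonal fun a => (blockSigns l d2 e a : ℤ) := by
  ext (a | i | i) (b | j | j) <;>
    simp [Dmat, Lmat, blockSigns, diagonal, one_apply, Prod.ext_iff, ite_and]

theorem diagonal_blockSigns_mem_DSub (l p q : ℕ) (d2 : Fin p → ℤˣ) (e : ℤˣ) :
    GeneralLinearGroup.diagonal (blockSigns l d2 e) ∈ DSub l p q :=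
  Subgroup.subset_closure <| Or.inr
    ⟨fun _ => false, d2, e, (Dmat_eq_diagonal_blockSigns l p q d2 e).symm⟩

namespace DSub

variable {l p q : ℕ} {M : GL (BIdx l p q) ℤ}
  (hM : M ∈ Subgroup.centralizer (DSub l p q : Set (GL (BIdx l p q) ℤ)))
include hM

theorem apply_eq_zero_of_blockSigns_ne (d2 : Fin p → ℤˣ) (e : ℤˣ) {a c : BIdx l p q}
    (h : blockSigns l d2 e a ≠ blockSigns l d2 e c) :
    (M : Matrix (BIdx l p q) (BIdx l p q) ℤ) a c = 0 := by
  refine apply_eq_zero_of_commute_diagonal_s12 (d := fun a => (blockSigns l d2 e a : ℤ)) ?_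
    (Units.val_injective.ne h)
  exact congr_arg Units.val (hM _ (diagonal_blockSigns_mem_DSub l p q d2 e))

theorem apply_middle_eq_zero_of_ne (i : Fin p) {b : BIdx l p q} (hb : b ≠ Sum.inr (Sum.inl i)) :
    (M : Matrix (BIdx l p q) (BIdx l p q) ℤ) (Sum.inr (Sum.inl i)) b = 0 ∧
      (M : Matrix (BIdx l p q) (BIdx l p q) ℤ) b (Sum.inr (Sum.inl i)) = 0 := by
  have hsigns : blockSigns l (Pi.mulSingle i (-1)) 1 b ≠ blockSigns l (Pi.mulSingle i (-1)) 1
      (Sum.inr (Sum.inl i) : BIdx l p q) := by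
    rcases b with _ | j | _ <;> simp_all [blockSigns]
  exact ⟨apply_eq_zero_of_blockSigns_ne hM _ _ hsigns.symm,
    apply_eq_zero_of_blockSigns_ne hM _ _ hsigns⟩

theorem apply_last_eq_zero (j : Fin q) {c : BIdx l p q} (hc : ∀ j', c ≠ Sum.inr (Sum.inr j')) :
    (M : Matrix (BIdx l p q) (BIdx l p q) ℤ) (Sum.inr (Sum.inr j)) c = 0 ∧
      (M : Matrix (BIdx l p q) (BIdx l p q) ℤ) c (Sum.inr (Sum.inr j)) = 0 := by
  have hsigns :
      blockSigns l 1 (-1) c ≠ blockSigns l 1 (-1) (Sum.inr (Sum.inr j) : BIdx l p q) := by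
    rcases c with _ | _ | j' <;> simp_all [blockSigns]
  exact ⟨apply_eq_zero_of_blockSigns_ne hM _ _ hsigns.symm,
    apply_eq_zero_of_blockSigns_ne hM _ _ hsigns⟩

end DSub

theorem stmt12_general (l p q : ℕ)
    (M : Matrix.GeneralLinearGroup (BIdx l p q) ℤ)
    (hM : M ∈ Subgroup.centralizer
      (DSub l p q : Set (Matrix.GeneralLinearGroup (BIdx l p q) ℤ))) :
    (∀ (a : Fin l × Fin 2) (i : Fin p),
      (M : Matrix (BIdx l p q) (BIdx l p q) ℤ) (Sum.inl a) (Sum.inr (Sum.inl i)) = 0 ∧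
      (M : Matrix (BIdx l p q) (BIdx l p q) ℤ) (Sum.inr (Sum.inl i)) (Sum.inl a) = 0) ∧
    (∀ (a : Fin l × Fin 2) (i : Fin q),
      (M : Matrix (BIdx l p q) (BIdx l p q) ℤ) (Sum.inl a) (Sum.inr (Sum.inr i)) = 0 ∧
      (M : Matrix (BIdx l p q) (BIdx l p q) ℤ) (Sum.inr (Sum.inr i)) (Sum.inl a) = 0) ∧
    (∀ (i : Fin p) (j : Fin q),
      (M : Matrix (BIdx l p q) (BIdx l p q) ℤ) (Sum.inr (Sum.inl i)) (Sum.inr (Sum.inr j)) = 0 ∧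
      (M : Matrix (BIdx l p q) (BIdx l p q) ℤ) (Sum.inr (Sum.inr j)) (Sum.inr (Sum.inl i)) = 0) ∧
    (∀ i j : Fin p, i ≠ j →
      (M : Matrix (BIdx l p q) (BIdx l p q) ℤ) (Sum.inr (Sum.inl i)) (Sum.inr (Sum.inl j)) = 0) ∧
    (∀ i : Fin p,
      (M : Matrix (BIdx l p q) (BIdx l p q) ℤ) (Sum.inr (Sum.inl i)) (Sum.inr (Sum.inl i)) = 1 ∨
      (M : Matrix (BIdx l p q) (BIdx l p q) ℤ) (Sum.inr (Sum.inl i)) (Sum.inr (Sum.inl i)) = -1) := by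
  have middle := DSub.apply_middle_eq_zero_of_ne hM
  have last := DSub.apply_last_eq_zero hM
  exact ⟨fun a i => (middle i (by simp)).symm, fun a j => (last j (by simp)).symm,
    fun i j => ⟨(middle i (by simp)).1, (last j (by simp)).1⟩,
    fun i j hij => (middle i (by simpa using hij.symm)).1, fun i => Int.isUnit_iff.mp <|
      GeneralLinearGroup.isUnit_apply_self_of_row_eq_zero M fun b hb => (middle i hb).1⟩

/-- Any matrix centralizing `D` is block-diagonal with respect to `d = 2l + p + q`,
with middle block diagonal having entries `±1`. -/
theorem stmt12 (l p q : ℕ) (hl : 1 ≤ l)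
    (M : Matrix.GeneralLinearGroup (BIdx l p q) ℤ)
    (hM : M ∈ Subgroup.centralizer
      (DSub l p q : Set (Matrix.GeneralLinearGroup (BIdx l p q) ℤ))) :
    (∀ (a : Fin l × Fin 2) (i : Fin p),
      (M : Matrix (BIdx l p q) (BIdx l p q) ℤ) (Sum.inl a) (Sum.inr (Sum.inl i)) = 0 ∧
      (M : Matrix (BIdx l p q) (BIdx l p q) ℤ) (Sum.inr (Sum.inl i)) (Sum.inl a) = 0) ∧
    (∀ (a : Fin l × Fin 2) (i : Fin q),
      (M : Matrix (BIdx l p q) (BIdx l p q) ℤ) (Sum.inl a) (Sum.inr (Sum.inr i)) = 0 ∧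
      (M : Matrix (BIdx l p q) (BIdx l p q) ℤ) (Sum.inr (Sum.inr i)) (Sum.inl a) = 0) ∧
    (∀ (i : Fin p) (j : Fin q),
      (M : Matrix (BIdx l p q) (BIdx l p q) ℤ) (Sum.inr (Sum.inl i)) (Sum.inr (Sum.inr j)) = 0 ∧
      (M : Matrix (BIdx l p q) (BIdx l p q) ℤ) (Sum.inr (Sum.inr j)) (Sum.inr (Sum.inl i)) = 0) ∧
    (∀ i j : Fin p, i ≠ j →
      (M : Matrix (BIdx l p q) (BIdx l p q) ℤ) (Sum.inr (Sum.inl i)) (Sum.inr (Sum.inl j)) = 0) ∧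
    (∀ i : Fin p,
      (M : Matrix (BIdx l p q) (BIdx l p q) ℤ) (Sum.inr (Sum.inl i)) (Sum.inr (Sum.inl i)) = 1 ∨
      (M : Matrix (BIdx l p q) (BIdx l p q) ℤ) (Sum.inr (Sum.inl i)) (Sum.inr (Sum.inl i)) = -1) :=
  stmt12_general l p q M hM
end
end
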